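/- arXiv:0805.2782 — 5 statements merged into one kernel-verified Lean document; each statement's English description precedes it below -/
import Mathlib

section
/- Let λ be a strict partition (all parts distinct) with o odd parts and e even parts. Then the srank of λ, defined as the minimum number of bars in a bar tableau of shape λ, equals max(o, e + (ℓ(λ) mod 2)), where ℓ(λ) is the number of parts of λ. -/
/-- Number of cells of the shifted diagram of `lam` filled with value `v`
(row `i` has cells with local column indices `0 ≤ j < lam_i`). -/
def cellCount (lam : List ℕ) (f : ℕ → ℕ → ℕ) (v : ℕ) : ℕ :=
  ∑ i ∈ Finset.range lam.length,
    ((Finset.range (lam.getD i 0)).filter (fun j => f i j = v)).card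

/-- The set of rows in which value `v` appears. -/
def rowsOf (lam : List ℕ) (f : ℕ → ℕ → ℕ) (v : ℕ) : Finset ℕ :=
  (Finset.range lam.length).filter
    (fun i => ∃ j ∈ Finset.range (lam.getD i 0), f i j = v)

/-- Number of cells of row `i` filled with a value `≤ v`. -/
def partialCount (lam : List ℕ) (f : ℕ → ℕ → ℕ) (v i : ℕ) : ℕ :=
  ((Finset.range (lam.getD i 0)).filter (fun j => f i j ≤ v)).card

/-- A bar tableau of shape the strict partition `lam`: a filling of the shifted
diagram with positive integers, weakly increasing in rows, each value occurring
an odd number of times, each value in at most two rows (both of which must begin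
with this value if there are two), and all partial shapes having distinct parts. -/
def IsBarTableau (lam : List ℕ) (f : ℕ → ℕ → ℕ) : Prop :=
  (∀ i j, i < lam.length → j < lam.getD i 0 → 1 ≤ f i j) ∧
  (∀ i j j', i < lam.length → j ≤ j' → j' < lam.getD i 0 → f i j ≤ f i j') ∧
  (∀ v, 1 ≤ v → cellCount lam f v = 0 ∨ Odd (cellCount lam f v)) ∧
  (∀ v, 1 ≤ v → (rowsOf lam f v).card ≤ 2 ∧
    ((rowsOf lam f v).card = 2 → ∀ i ∈ rowsOf lam f v, f i 0 = v)) ∧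
  (∀ v i i', 1 ≤ v → i < i' → i' < lam.length →
    partialCount lam f v i ≠ 0 → partialCount lam f v i' ≠ 0 →
    partialCount lam f v i ≠ partialCount lam f v i')

/-- The set of values used by the filling. -/
def valueSet (lam : List ℕ) (f : ℕ → ℕ → ℕ) : Finset ℕ :=
  (Finset.range lam.length).biUnion
    (fun i => (Finset.range (lam.getD i 0)).image (f i))

/-- The number of bars of a bar tableau: the number of distinct values used. -/
def barNum (lam : List ℕ) (f : ℕ → ℕ → ℕ) : ℕ := (valueSet lam f).card

/-- The srank of a strict partition: the minimum number of bars in a bar tableau. -/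
noncomputable def srank (lam : List ℕ) : ℕ :=
  sInf {k | ∃ f, IsBarTableau lam f ∧ barNum lam f = k}

/-- `ε(λ)`: the parity of the number of even parts of `λ`. -/
def epsP (l : List ℕ) : ℕ := (l.countP (fun x => decide (x % 2 = 0))) % 2

noncomputable def msMax (d : Multiset ℕ) : ℕ := d.toList.foldr max 0

/-- The factor `n_i` contributed by the removal of a bar turning the strict
partition `mu` into the strict partition `nu`; the three branches correspond to
bars of Type 2 (`i ∈ I₀`), Type 3 (`i ∈ I₋`) and Type 1 (`i ∈ I₊`). -/
noncomputable def barFactor (mu nu : List ℕ) : ℤ :=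
  let d : Multiset ℕ := (↑mu : Multiset ℕ) - ↑nu
  let a : Multiset ℕ := (↑nu : Multiset ℕ) - ↑mu
  if a = 0 then
    if Multiset.card d = 1 then
      (-1 : ℤ) ^ (mu.length - 1 - mu.idxOf d.sum)
    else
      (-1 : ℤ) ^ (mu.idxOf (d.sum - msMax d) - mu.idxOf (msMax d) + msMax d) *
        2 ^ (1 - epsP mu)
  else
    (-1 : ℤ) ^ (nu.idxOf a.sum - mu.idxOf d.sum) * 2 ^ (1 - epsP mu)

/-- The strict partition formed by the cells with values `≤ v` (nonzero row
lengths, reordered decreasingly). -/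
def subShape (lam : List ℕ) (f : ℕ → ℕ → ℕ) (v : ℕ) : List ℕ :=
  ((((List.range lam.length).map (fun i => partialCount lam f v i)).filter
      (fun c => decide (0 < c)) : Multiset ℕ).sort (· ≤ ·)).reverse

/-- The weight `wt(T)` of a bar tableau: the product of the factors `n_i`
associated with the successive removals of the bars, largest value first. -/
noncomputable def weight (lam : List ℕ) (f : ℕ → ℕ → ℕ) : ℤ :=
  let vals := (valueSet lam f).sort (· ≤ ·)
  (List.range vals.length).foldr
    (fun k acc =>
      barFactor (subShape lam f (vals.getD k 0))
        (subShape lam f (if k = 0 then 0 else vals.getD (k - 1) 0)) * acc) 1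

/-- Fillings vanishing outside the diagram (canonical representatives). -/
def Canonical (lam : List ℕ) (f : ℕ → ℕ → ℕ) : Prop :=
  ∀ i j, ¬ (i < lam.length ∧ j < lam.getD i 0) → f i j = 0

def EqOnShape (lam : List ℕ) (f g : ℕ → ℕ → ℕ) : Prop :=
  ∀ i j, i < lam.length → j < lam.getD i 0 → f i j = g i j

/-- The tableau has type `(s₁, s₂)`. -/
def HasType2 (lam : List ℕ) (f : ℕ → ℕ → ℕ) (s1 s2 : ℕ) : Prop :=
  cellCount lam f 1 = s1 ∧ cellCount lam f 2 = s2 ∧ ∀ v, 3 ≤ v → cellCount lam f v = 0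

/-- The tableau has type `(t)`. -/
def HasType1 (lam : List ℕ) (f : ℕ → ℕ → ℕ) (t : ℕ) : Prop :=
  cellCount lam f 1 = t ∧ ∀ v, 2 ≤ v → cellCount lam f v = 0


lemma countP_eq_card_filter_range (p : ℕ → Bool) (l : List ℕ) :
    l.countP p = ((Finset.range l.length).filter (fun i => p (l.getD i 0))).card := by
  induction l with
  | nil => simp
  | cons a l ih =>
    rw [Finset.card_filter, List.length_cons, Finset.sum_range_succ']
    simp only [List.getD_cons_succ, List.getD_cons_zero, ← Finset.card_filter]
    rw [← ih, List.countP_cons]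

lemma getD_map_except (g : ℕ → ℕ) (l : List ℕ) (i : ℕ) :
    (l.map g).getD i 0 = if i < l.length then g (l.getD i 0) else 0 := by
  by_cases h : i < l.length
  · simp [h, List.getD_eq_getElem?_getD, List.getElem?_map,
      List.getElem?_eq_getElem h]
  · simp [h, List.getD_eq_getElem?_getD, List.getElem?_eq_none (le_of_not_gt h),
      List.getElem?_map]

lemma map_except_perm (g : ℕ → ℕ) (a : ℕ) (hg : ∀ x, x ≠ a → g x = x)
    (l : List ℕ) (ha : l.count a = 1) : (l.map g).Perm (g a :: l.erase a) := by
  induction l with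
  | nil => simp at ha
  | cons x xs ih =>
    by_cases hx : x = a
    · rw [hx, List.count_cons_self] at ha
      have h0 : xs.count a = 0 := by omega
      have hxa : a ∉ xs := by
        intro hmem
        rw [List.count_eq_zero] at h0
        exact h0 hmem
      have hmap : xs.map g = xs := by
        have : xs.map g = xs.map id := List.map_congr_left
          (fun y hy => hg y (fun h => hxa (h ▸ hy)))
        simpa using this
      rw [hx, List.erase_cons_head, List.map_cons, hmap]
    · have hax : a ≠ x := fun h => hx h.symm
      rw [List.count_cons_of_ne hx] at ha
      have h1 := (ih ha).cons x
      rw [List.erase_cons_tail (by simpa using hx)]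
      rw [List.map_cons, hg x hx]
      exact h1.trans (List.Perm.swap _ _ _)

/-! ### basic defs -/

def oP (l : List ℕ) : ℕ := l.countP (fun x => decide (x % 2 = 1))
def ePar (l : List ℕ) : ℕ := l.countP (fun x => decide (x ≠ 0 ∧ x % 2 = 0))
def lPar (l : List ℕ) : ℕ := l.countP (fun x => decide (x ≠ 0))
def MVal (l : List ℕ) : ℕ := max (oP l) (ePar l + lPar l % 2)
def good (l : List ℕ) : Prop := (l.filter (fun x => decide (x ≠ 0))).Nodup

lemma lPar_eq (l : List ℕ) : lPar l = oP l + ePar l := by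
  induction l with
  | nil => rfl
  | cons a l ih =>
    simp only [lPar, oP, ePar, List.countP_cons] at *
    have h2 : a % 2 = 0 ∨ a % 2 = 1 := by omega
    by_cases h : a = 0
    · subst h; simp at *; omega
    · rcases h2 with h2 | h2 <;> simp [h, h2] at * <;> omega

lemma sum_eq_sum_getD (l : List ℕ) :
    l.sum = ∑ i ∈ Finset.range l.length, l.getD i 0 := by
  induction l with
  | nil => simp
  | cons a l ih =>
    rw [List.sum_cons, List.length_cons, Finset.sum_range_succ']
    simp only [List.getD_cons_succ, List.getD_cons_zero, ← ih]
    omega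

lemma good_count_one {l : List ℕ} (hg : good l) {a : ℕ} (ha : a ∈ l) (ha0 : a ≠ 0) :
    l.count a = 1 := by
  have h1 : a ∈ l.filter (fun x => decide (x ≠ 0)) := by
    rw [List.mem_filter]; simp [ha, ha0]
  have h2 := List.count_eq_one_of_mem hg h1
  rwa [List.count_filter (by simp [ha0])] at h2

lemma card_filter_getD_eq (l : List ℕ) (a : ℕ) :
    ((Finset.range l.length).filter (fun i => l.getD i 0 = a)).card = l.count a := by
  rw [List.count, show ((· == a) : ℕ → Bool) = fun x => decide (x = a) by
    funext x; by_cases h : x = a <;> simp [h], countP_eq_card_filter_range]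
  congr 1
  apply Finset.filter_congr
  intro i _
  simp

/-- replace `a` by `b` -/
def rp (a b x : ℕ) : ℕ := if x = a then b else x

@[simp] lemma rp_self (a b : ℕ) : rp a b a = b := if_pos rfl
lemma rp_ne (a b x : ℕ) (h : x ≠ a) : rp a b x = x := if_neg h
lemma rp_le (a b : ℕ) (hb : b ≤ a) : ∀ x, rp a b x ≤ x := by
  intro x
  unfold rp
  split <;> omega
lemma rp_zero (a b : ℕ) (ha : a ≠ 0) : rp a b 0 = 0 :=
  if_neg (fun h => ha h.symm)

/-- counts after replacing the unique occurrence of `a` by `b`. -/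
lemma replace_countP (l : List ℕ) (a b : ℕ) (ha : l.count a = 1) (p : ℕ → Bool) :
    (l.map (rp a b)).countP p + (if p a then 1 else 0)
      = l.countP p + (if p b then 1 else 0) := by
  have hperm := map_except_perm (rp a b) a
    (fun x hx => rp_ne a b x hx) l ha
  have hmem : a ∈ l := by
    by_contra h
    rw [List.count_eq_zero_of_not_mem h] at ha; omega
  have hl := (List.perm_cons_erase hmem).countP_eq p
  have hr := hperm.countP_eq p
  rw [hr, hl, List.countP_cons, List.countP_cons, rp_self]
  by_cases hpa : p a <;> by_cases hpb : p b <;> simp [hpa, hpb] <;> omega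

lemma replace_sum (l : List ℕ) (a b : ℕ) (ha : l.count a = 1) :
    (l.map (rp a b)).sum + a = l.sum + b := by
  have hperm := map_except_perm (rp a b) a
    (fun x hx => rp_ne a b x hx) l ha
  have hmem : a ∈ l := by
    by_contra h
    rw [List.count_eq_zero_of_not_mem h] at ha; omega
  have hl := (List.perm_cons_erase hmem).sum_eq
  have hr := hperm.sum_eq
  rw [show (rp a b) a = b from rp_self a b] at hr
  rw [hr, hl, List.sum_cons, List.sum_cons]
  omega

lemma replace_good {l : List ℕ} (hg : good l) (a b : ℕ) (ha : l.count a = 1)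
    (hb : b = 0 ∨ (b ∉ l ∧ b ≠ 0)) :
    good (l.map (rp a b)) := by
  have hperm := map_except_perm (rp a b) a
    (fun x hx => rp_ne a b x hx) l ha
  have hmem : a ∈ l := by
    by_contra h
    rw [List.count_eq_zero_of_not_mem h] at ha; omega
  have hperm2 := hperm.filter (fun x => decide (x ≠ 0))
  rw [show (rp a b) a = b from rp_self a b] at hperm2
  unfold good
  rw [hperm2.nodup_iff]
  have htail : ((l.erase a).filter (fun x => decide (x ≠ 0))).Nodup :=
    ((List.erase_sublist (a := a) (l := l)).filter _).nodup hg
  rcases hb with hb | ⟨hbl, hb0⟩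
  · subst hb
    rw [List.filter_cons, if_neg (by simp)]
    exact htail
  · rw [List.filter_cons, if_pos (by simpa using hb0), List.nodup_cons]
    refine ⟨fun h => hbl ((List.erase_sublist (a := a) (l := l)).subset (List.mem_of_mem_filter h)), htail⟩

/-! ### choice of bars -/

def maxOdd (l : List ℕ) : ℕ :=
  if h : (l.toFinset.filter (fun x => x % 2 = 1)).Nonempty
  then (l.toFinset.filter (fun x => x % 2 = 1)).max' h else 0

def maxEven (l : List ℕ) : ℕ :=
  if h : (l.toFinset.filter (fun x => x ≠ 0 ∧ x % 2 = 0)).Nonempty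
  then (l.toFinset.filter (fun x => x ≠ 0 ∧ x % 2 = 0)).max' h else 0

open Classical in
noncomputable def freeOdd (l : List ℕ) : ℕ :=
  if h : ∃ t, t % 2 = 1 ∧ t < maxEven l ∧ t ∉ l then h.choose else 0

lemma maxOdd_spec {l : List ℕ} (h : oP l ≠ 0) :
    maxOdd l ∈ l ∧ maxOdd l % 2 = 1 := by
  have h1 : 0 < l.countP (fun x => decide (x % 2 = 1)) := Nat.pos_of_ne_zero h
  rw [List.countP_pos_iff] at h1
  obtain ⟨x, hx, hx2⟩ := h1
  have hne : (l.toFinset.filter (fun x => x % 2 = 1)).Nonempty :=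
    ⟨x, Finset.mem_filter.2 ⟨List.mem_toFinset.2 hx, by simpa using hx2⟩⟩
  rw [maxOdd, dif_pos hne]
  have := Finset.max'_mem _ hne
  rw [Finset.mem_filter, List.mem_toFinset] at this
  exact this

lemma maxEven_spec {l : List ℕ} (h : ePar l ≠ 0) :
    maxEven l ∈ l ∧ maxEven l ≠ 0 ∧ maxEven l % 2 = 0 ∧
      ∀ x ∈ l, x ≠ 0 → x % 2 = 0 → x ≤ maxEven l := by
  have h1 : 0 < l.countP (fun x => decide (x ≠ 0 ∧ x % 2 = 0)) := Nat.pos_of_ne_zero h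
  rw [List.countP_pos_iff] at h1
  obtain ⟨x, hx, hx2⟩ := h1
  have hne : (l.toFinset.filter (fun x => x ≠ 0 ∧ x % 2 = 0)).Nonempty :=
    ⟨x, Finset.mem_filter.2 ⟨List.mem_toFinset.2 hx, by simpa using hx2⟩⟩
  rw [maxEven, dif_pos hne]
  have hmem := Finset.max'_mem _ hne
  rw [Finset.mem_filter, List.mem_toFinset] at hmem
  refine ⟨hmem.1, hmem.2.1, hmem.2.2, fun y hy hy0 hy2 => ?_⟩
  exact Finset.le_max' _ y (Finset.mem_filter.2 ⟨List.mem_toFinset.2 hy, ⟨hy0, hy2⟩⟩)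

lemma ePar_le_half {l : List ℕ} (hg : good l) (h : ePar l ≠ 0) :
    ePar l ≤ maxEven l / 2 := by
  set L := maxEven l with hL
  obtain ⟨-, -, -, hmax⟩ := maxEven_spec h
  -- the nonzero even entries form a Nodup list
  have hfil : l.filter (fun x => decide (x ≠ 0 ∧ x % 2 = 0))
      = (l.filter (fun x => decide (x ≠ 0))).filter (fun x => decide (x % 2 = 0)) := by
    rw [List.filter_filter]
    apply List.filter_congr
    intro x _
    by_cases h0 : x = 0 <;> by_cases h2 : x % 2 = 0 <;> simp [h0, h2]
  have hnd : (l.filter (fun x => decide (x ≠ 0 ∧ x % 2 = 0))).Nodup := by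
    rw [hfil]; exact hg.filter _
  have hcard : ePar l = (l.filter (fun x => decide (x ≠ 0 ∧ x % 2 = 0))).toFinset.card := by
    rw [List.toFinset_card_of_nodup hnd, ← List.countP_eq_length_filter]; rfl
  set B := (l.filter (fun x => decide (x ≠ 0 ∧ x % 2 = 0))).toFinset with hB
  have hsub : ∀ x ∈ B, x ≠ 0 ∧ x % 2 = 0 ∧ x ≤ L := by
    intro x hx
    rw [hB, List.mem_toFinset, List.mem_filter] at hx
    have h2 := hx.2
    simp only [decide_eq_true_eq] at h2
    exact ⟨h2.1, h2.2, hmax x hx.1 h2.1 h2.2⟩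
  have hinj : Set.InjOn (· / 2) B := by
    intro x hx y hy hxy
    obtain ⟨hx0, hx2, -⟩ := hsub x hx
    obtain ⟨hy0, hy2, -⟩ := hsub y hy
    simp only at hxy
    omega
  have himg : B.image (· / 2) ⊆ Finset.Icc 1 (L / 2) := by
    intro y hy
    rw [Finset.mem_image] at hy
    obtain ⟨x, hx, rfl⟩ := hy
    obtain ⟨hx0, hx2, hxL⟩ := hsub x hx
    rw [Finset.mem_Icc]
    omega
  calc ePar l = B.card := hcard
    _ = (B.image (· / 2)).card := (Finset.card_image_of_injOn hinj).symm
    _ ≤ (Finset.Icc 1 (L / 2)).card := Finset.card_le_card himg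
    _ = L / 2 := by rw [Nat.card_Icc]; omega

lemma card_odd_range (L : ℕ) (hL : L % 2 = 0) :
    ((Finset.range L).filter (fun t => t % 2 = 1)).card = L / 2 := by
  have : (Finset.range L).filter (fun t => t % 2 = 1)
      = (Finset.range (L / 2)).image (fun k => 2 * k + 1) := by
    ext t
    simp only [Finset.mem_filter, Finset.mem_range, Finset.mem_image]
    constructor
    · rintro ⟨h1, h2⟩
      exact ⟨t / 2, by omega, by omega⟩
    · rintro ⟨k, hk, rfl⟩
      omega
  rw [this, Finset.card_image_of_injective _ (fun x y h => by omega), Finset.card_range]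

lemma oP_ge_card_oddEntries (l : List ℕ) :
    (l.toFinset.filter (fun x => x % 2 = 1)).card ≤ oP l := by
  have h1 : (l.toFinset.filter (fun x => x % 2 = 1))
      = (l.filter (fun x => decide (x % 2 = 1))).toFinset := by
    rw [List.toFinset_filter]
    apply Finset.filter_congr
    intro x _
    simp
  rw [h1]
  calc (l.filter (fun x => decide (x % 2 = 1))).toFinset.card
      ≤ (l.filter (fun x => decide (x % 2 = 1))).length := List.toFinset_card_le _
    _ = oP l := List.countP_eq_length_filter.symm

lemma freeOdd_spec {l : List ℕ} (hg : good l) (hlt : oP l + 1 ≤ ePar l) :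
    freeOdd l % 2 = 1 ∧ freeOdd l < maxEven l ∧ freeOdd l ∉ l := by
  have hE : ePar l ≠ 0 := by omega
  set L := maxEven l with hL
  obtain ⟨-, hL0, hL2, -⟩ := maxEven_spec hE
  have hhalf := ePar_le_half hg hE
  have hex : ∃ t, t % 2 = 1 ∧ t < L ∧ t ∉ l := by
    by_contra hc
    push_neg at hc
    -- every odd t < L is in l
    have hsub : (Finset.range L).filter (fun t => t % 2 = 1)
        ⊆ l.toFinset.filter (fun x => x % 2 = 1) := by
      intro t ht
      rw [Finset.mem_filter, Finset.mem_range] at ht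
      rw [Finset.mem_filter, List.mem_toFinset]
      exact ⟨hc t ht.2 ht.1, ht.2⟩
    have hcard := Finset.card_le_card hsub
    rw [card_odd_range L hL2] at hcard
    have := oP_ge_card_oddEntries l
    omega
  rw [freeOdd, dif_pos hex]
  exact hex.choose_spec

/-! ### the step function -/

noncomputable def step (l : List ℕ) : List ℕ :=
  if oP l > ePar l + lPar l % 2 then l.map (rp (maxOdd l) 0)
  else if oP l < ePar l + lPar l % 2 then l.map (rp (maxEven l) (freeOdd l))
  else if 0 < ePar l ∧ 0 < oP l then (l.map (rp (maxEven l) 0)).map (rp (maxOdd l) 0)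
  else if 0 < oP l then l.map (rp (maxOdd l) 0)
  else l

structure StepOK (l l' : List ℕ) : Prop where
  len : l'.length = l.length
  good' : good l'
  mval : MVal l' + 1 = MVal l
  le : ∀ i, l'.getD i 0 ≤ l.getD i 0
  lt : l'.sum < l.sum
  oddrem : Odd (l.sum - l'.sum)
  Rne : ((Finset.range l.length).filter (fun i => l'.getD i 0 < l.getD i 0)).Nonempty
  Rcard : ((Finset.range l.length).filter (fun i => l'.getD i 0 < l.getD i 0)).card ≤ 2
  Rzero : ((Finset.range l.length).filter (fun i => l'.getD i 0 < l.getD i 0)).card = 2 →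
    ∀ i ∈ (Finset.range l.length).filter (fun i => l'.getD i 0 < l.getD i 0), l'.getD i 0 = 0

lemma R_filter_eq (l : List ℕ) (f : ℕ → ℕ) (P : ℕ → Prop) [DecidablePred P]
    (hP : ∀ x, f x < x ↔ P x) :
    (Finset.range l.length).filter (fun i => (l.map f).getD i 0 < l.getD i 0)
      = (Finset.range l.length).filter (fun i => P (l.getD i 0)) := by
  ext i
  simp only [Finset.mem_filter, Finset.mem_range]
  constructor
  · rintro ⟨h1, h2⟩
    rw [getD_map_except, if_pos h1] at h2
    exact ⟨h1, (hP _).1 h2⟩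
  · rintro ⟨h1, h2⟩
    rw [getD_map_except, if_pos h1]
    exact ⟨h1, (hP _).2 h2⟩

lemma rp_lt_iff (a b : ℕ) (hb : b < a) : ∀ x, rp a b x < x ↔ x = a := by
  intro x
  unfold rp
  split <;> rename_i h <;> simp [h] <;> omega

lemma replace_stepOK {l : List ℕ} (hg : good l) (a b : ℕ) (ha : a ∈ l) (ha0 : a ≠ 0)
    (hb : b < a) (hbl : b = 0 ∨ (b ∉ l ∧ b ≠ 0)) (hab : (a - b) % 2 = 1)
    (hm : MVal (l.map (rp a b)) + 1 = MVal l) :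
    StepOK l (l.map (rp a b)) := by
  have hc := good_count_one hg ha ha0
  have hsum := replace_sum l a b hc
  have hR := R_filter_eq l (rp a b) (fun x => x = a) (rp_lt_iff a b hb)
  have hcard : ((Finset.range l.length).filter
      (fun i => (l.map (rp a b)).getD i 0 < l.getD i 0)).card = 1 := by
    rw [hR, card_filter_getD_eq, hc]
  refine ⟨by simp, replace_good hg a b hc hbl, hm, ?_, by omega, ?_, ?_, by omega, by omega⟩
  · intro i
    rw [getD_map_except]
    split
    · exact rp_le a b (le_of_lt hb) _
    · exact Nat.zero_le _
  · rw [Nat.odd_iff]; omega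
  · rw [← Finset.card_pos]; omega

/-- two-row removal: zero out `a` (even) and `c` (odd). -/
lemma replace2_stepOK {l : List ℕ} (hg : good l) (a c : ℕ) (ha : a ∈ l) (ha0 : a ≠ 0)
    (ha2 : a % 2 = 0) (hcl : c ∈ l) (hc2 : c % 2 = 1)
    (hm : MVal ((l.map (rp a 0)).map (rp c 0)) + 1 = MVal l) :
    StepOK l ((l.map (rp a 0)).map (rp c 0)) := by
  have hc0 : c ≠ 0 := by omega
  have hac : c ≠ a := by intro h; rw [h] at hc2; omega
  have hcnt_a := good_count_one hg ha ha0
  have hgood1 : good (l.map (rp a 0)) := replace_good hg a 0 hcnt_a (Or.inl rfl)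
  have hcl1 : c ∈ l.map (rp a 0) := by
    have : rp a 0 c = c := rp_ne a 0 c hac
    exact this ▸ List.mem_map_of_mem (f := rp a 0) hcl
  have hcnt_c := good_count_one hgood1 hcl1 hc0
  have hgood2 : good ((l.map (rp a 0)).map (rp c 0)) :=
    replace_good hgood1 c 0 hcnt_c (Or.inl rfl)
  have hsum1 := replace_sum l a 0 hcnt_a
  have hsum2 := replace_sum (l.map (rp a 0)) c 0 hcnt_c
  have hle1 : ∀ i, (l.map (rp a 0)).getD i 0 ≤ l.getD i 0 := by
    intro i
    rw [getD_map_except]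
    split
    · exact rp_le a 0 (Nat.zero_le a) _
    · exact Nat.zero_le _
  have hle2 : ∀ i, ((l.map (rp a 0)).map (rp c 0)).getD i 0 ≤ (l.map (rp a 0)).getD i 0 := by
    intro i
    rw [getD_map_except]
    split
    · exact rp_le c 0 (Nat.zero_le c) _
    · exact Nat.zero_le _
  have hcomp' : ∀ x, (rp c 0 ∘ rp a 0) x = if x = a ∨ x = c then 0 else x := by
    intro x
    by_cases hx : x = a
    · rw [if_pos (Or.inl hx), hx]
      show rp c 0 (rp a 0 a) = 0
      rw [rp_self, rp_zero c 0 hc0]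
    · by_cases hx2 : x = c
      · rw [if_pos (Or.inr hx2), hx2]
        show rp c 0 (rp a 0 c) = 0
        rw [rp_ne a 0 c hac, rp_self]
      · rw [if_neg (by tauto)]
        show rp c 0 (rp a 0 x) = x
        rw [rp_ne a 0 x hx, rp_ne c 0 x hx2]
  have hcomp : (l.map (rp a 0)).map (rp c 0) = l.map (rp c 0 ∘ rp a 0) := by
    rw [List.map_map]
  have hRP : ∀ x, (rp c 0 ∘ rp a 0) x < x ↔ (x = a ∨ x = c) := by
    intro x
    rw [hcomp']
    split <;> rename_i h
    · rcases h with h | h <;> subst h <;> simp <;> omega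
    · simp [h]
  have hR := R_filter_eq l (rp c 0 ∘ rp a 0) (fun x => x = a ∨ x = c) hRP
  have hcnt_c_l : l.count c = 1 := good_count_one hg hcl hc0
  have hdisj : Disjoint ((Finset.range l.length).filter (fun i => l.getD i 0 = a))
      ((Finset.range l.length).filter (fun i => l.getD i 0 = c)) := by
    rw [Finset.disjoint_filter]
    intro i _ h1 h2
    exact hac (h2.symm.trans h1)
  have hRcard : ((Finset.range l.length).filter
      (fun i => ((l.map (rp a 0)).map (rp c 0)).getD i 0 < l.getD i 0)).card = 2 := by
    rw [hcomp, hR, Finset.filter_or, Finset.card_union_of_disjoint hdisj,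
      card_filter_getD_eq, card_filter_getD_eq, hcnt_a, hcnt_c_l]
  have haS : a ≤ l.sum := List.le_sum_of_mem ha
  refine ⟨by simp, hgood2, hm, fun i => le_trans (hle2 i) (hle1 i), by omega, ?_, ?_, ?_, ?_⟩
  · rw [Nat.odd_iff]; omega
  · rw [← Finset.card_pos, hRcard]; omega
  · rw [hRcard]
  · intro _ i hi
    rw [hcomp] at hi
    rw [hR, Finset.mem_filter, Finset.mem_range] at hi
    rw [hcomp, getD_map_except, if_pos hi.1, hcomp', if_pos hi.2]

lemma step_spec {l : List ℕ} (hg : good l) (hne : lPar l ≠ 0) : StepOK l (step l) := by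
  have hle := lPar_eq l
  by_cases h1 : oP l > ePar l + lPar l % 2
  · -- remove largest odd part entirely
    have ho : oP l ≠ 0 := by omega
    obtain ⟨ha, ha2⟩ := maxOdd_spec ho
    set a := maxOdd l with hadef
    have ha0 : a ≠ 0 := by omega
    have hcnt := good_count_one hg ha ha0
    have hoP : oP (l.map (rp a 0)) + 1 = oP l := by
      have := replace_countP l a 0 hcnt (fun x => decide (x % 2 = 1))
      unfold oP
      simpa [ha2] using this
    have heP : ePar (l.map (rp a 0)) = ePar l := by
      have := replace_countP l a 0 hcnt (fun x => decide (x ≠ 0 ∧ x % 2 = 0))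
      unfold ePar
      simpa [ha2] using this
    have hlP : lPar (l.map (rp a 0)) + 1 = lPar l := by
      have := replace_countP l a 0 hcnt (fun x => decide (x ≠ 0))
      unfold lPar
      simpa [ha0] using this
    have hle' := lPar_eq (l.map (rp a 0))
    have hm : MVal (l.map (rp a 0)) + 1 = MVal l := by
      unfold MVal
      omega
    have hstep : step l = l.map (rp a 0) := by
      unfold step
      rw [if_pos h1]
    rw [hstep]
    exact replace_stepOK hg a 0 ha ha0 (by omega) (Or.inl rfl) (by omega) hm
  · by_cases h2 : oP l < ePar l + lPar l % 2
    · -- reduce largest even part to a free odd value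
      have hlt : oP l + 1 ≤ ePar l := by omega
      have he : ePar l ≠ 0 := by omega
      obtain ⟨ha, ha0, ha2, -⟩ := maxEven_spec he
      obtain ⟨ht2, htlt, htl⟩ := freeOdd_spec hg hlt
      set a := maxEven l with hadef
      set t := freeOdd l with htdef
      have ht0 : t ≠ 0 := by omega
      have hcnt := good_count_one hg ha ha0
      have hoP : oP (l.map (rp a t)) = oP l + 1 := by
        have := replace_countP l a t hcnt (fun x => decide (x % 2 = 1))
        unfold oP
        simpa [ha2, ht2] using this
      have heP : ePar (l.map (rp a t)) + 1 = ePar l := by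
        have := replace_countP l a t hcnt (fun x => decide (x ≠ 0 ∧ x % 2 = 0))
        unfold ePar
        simpa [ha2, ha0, ht2] using this
      have hlP : lPar (l.map (rp a t)) = lPar l := by
        have := replace_countP l a t hcnt (fun x => decide (x ≠ 0))
        unfold lPar
        simpa [ha0, ht0] using this
      have hle' := lPar_eq (l.map (rp a t))
      have hm : MVal (l.map (rp a t)) + 1 = MVal l := by
        unfold MVal
        omega
      have hstep : step l = l.map (rp a t) := by
        unfold step
        rw [if_neg h1, if_pos h2]
      rw [hstep]
      exact replace_stepOK hg a t ha ha0 htlt (Or.inr ⟨htl, ht0⟩) (by omega) hm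
    · by_cases h3 : 0 < ePar l ∧ 0 < oP l
      · -- remove largest even and largest odd part entirely
        obtain ⟨ha, ha0, ha2, -⟩ := maxEven_spec (show ePar l ≠ 0 from h3.1.ne')
        obtain ⟨hc, hc2⟩ := maxOdd_spec (show oP l ≠ 0 from h3.2.ne')
        set a := maxEven l with hadef
        set c := maxOdd l with hcdef
        have hc0 : c ≠ 0 := by omega
        have hac : c ≠ a := by omega
        have hcnt_a := good_count_one hg ha ha0
        have hgood1 : good (l.map (rp a 0)) := replace_good hg a 0 hcnt_a (Or.inl rfl)
        have hcl1 : c ∈ l.map (rp a 0) := by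
          have : rp a 0 c = c := rp_ne a 0 c hac
          exact this ▸ List.mem_map_of_mem (f := rp a 0) hc
        have hcnt_c := good_count_one hgood1 hcl1 hc0
        have hoP1 : oP (l.map (rp a 0)) = oP l := by
          have := replace_countP l a 0 hcnt_a (fun x => decide (x % 2 = 1))
          unfold oP
          simpa [ha2] using this
        have heP1 : ePar (l.map (rp a 0)) + 1 = ePar l := by
          have := replace_countP l a 0 hcnt_a (fun x => decide (x ≠ 0 ∧ x % 2 = 0))
          unfold ePar
          simpa [ha2, ha0] using this
        have hlP1 : lPar (l.map (rp a 0)) + 1 = lPar l := by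
          have := replace_countP l a 0 hcnt_a (fun x => decide (x ≠ 0))
          unfold lPar
          simpa [ha0] using this
        have hoP2 : oP ((l.map (rp a 0)).map (rp c 0)) + 1 = oP (l.map (rp a 0)) := by
          have := replace_countP (l.map (rp a 0)) c 0 hcnt_c (fun x => decide (x % 2 = 1))
          unfold oP
          simpa [hc2] using this
        have heP2 : ePar ((l.map (rp a 0)).map (rp c 0)) = ePar (l.map (rp a 0)) := by
          have := replace_countP (l.map (rp a 0)) c 0 hcnt_c
            (fun x => decide (x ≠ 0 ∧ x % 2 = 0))
          unfold ePar
          simpa [hc2] using this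
        have hlP2 : lPar ((l.map (rp a 0)).map (rp c 0)) + 1 = lPar (l.map (rp a 0)) := by
          have := replace_countP (l.map (rp a 0)) c 0 hcnt_c (fun x => decide (x ≠ 0))
          unfold lPar
          simpa [hc0] using this
        have hle' := lPar_eq ((l.map (rp a 0)).map (rp c 0))
        have hm : MVal ((l.map (rp a 0)).map (rp c 0)) + 1 = MVal l := by
          unfold MVal
          omega
        have hstep : step l = (l.map (rp a 0)).map (rp c 0) := by
          unfold step
          rw [if_neg h1, if_neg h2, if_pos h3]
        rw [hstep]
        exact replace2_stepOK hg a c ha ha0 ha2 hc hc2 hm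
      · by_cases h4 : 0 < oP l
        · -- single odd part
          have he0 : ePar l = 0 := by omega
          obtain ⟨ha, ha2⟩ := maxOdd_spec (show oP l ≠ 0 from h4.ne')
          set a := maxOdd l with hadef
          have ha0 : a ≠ 0 := by omega
          have hcnt := good_count_one hg ha ha0
          have hoP : oP (l.map (rp a 0)) + 1 = oP l := by
            have := replace_countP l a 0 hcnt (fun x => decide (x % 2 = 1))
            unfold oP
            simpa [ha2] using this
          have heP : ePar (l.map (rp a 0)) = ePar l := by
            have := replace_countP l a 0 hcnt (fun x => decide (x ≠ 0 ∧ x % 2 = 0))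
            unfold ePar
            simpa [ha2] using this
          have hlP : lPar (l.map (rp a 0)) + 1 = lPar l := by
            have := replace_countP l a 0 hcnt (fun x => decide (x ≠ 0))
            unfold lPar
            simpa [ha0] using this
          have hle' := lPar_eq (l.map (rp a 0))
          have hm : MVal (l.map (rp a 0)) + 1 = MVal l := by
            unfold MVal
            omega
          have hstep : step l = l.map (rp a 0) := by
            unfold step
            rw [if_neg h1, if_neg h2, if_neg h3, if_pos h4]
          rw [hstep]
          exact replace_stepOK hg a 0 ha ha0 (by omega) (Or.inl rfl) (by omega) hm
        · exfalso
          omega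

/-! ### the tableau construction -/

noncomputable def buildF : ℕ → List ℕ → ℕ → ℕ → ℕ
  | 0, _, _, _ => 0
  | n+1, l, i, j => if j < (step l).getD i 0 then buildF n (step l) i j else MVal l

lemma lPar_ne_zero_iff (l : List ℕ) : lPar l ≠ 0 ↔ l.sum ≠ 0 := by
  unfold lPar
  rw [not_iff_not]
  constructor
  · intro h
    rw [List.sum_eq_zero_iff]
    intro x hx
    by_contra hx0
    have : 0 < l.countP (fun x => decide (x ≠ 0)) :=
      List.countP_pos_iff.2 ⟨x, hx, by simpa using hx0⟩
    omega
  · intro h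
    rw [List.sum_eq_zero_iff] at h
    by_contra h0
    obtain ⟨x, hx, hx0⟩ := List.countP_pos_iff.1 (Nat.pos_of_ne_zero h0)
    simp only [decide_eq_true_eq] at hx0
    exact hx0 (h x hx)

lemma counts_of_sum_zero {l : List ℕ} (h : l.sum = 0) :
    oP l = 0 ∧ ePar l = 0 ∧ lPar l = 0 ∧ MVal l = 0 := by
  rw [List.sum_eq_zero_iff] at h
  have ho : oP l = 0 := by
    unfold oP
    rw [List.countP_eq_zero]
    intro x hx
    simp [h x hx]
  have he : ePar l = 0 := by
    unfold ePar
    rw [List.countP_eq_zero]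
    intro x hx
    simp [h x hx]
  have hl : lPar l = 0 := by
    unfold lPar
    rw [List.countP_eq_zero]
    intro x hx
    simp [h x hx]
  refine ⟨ho, he, hl, ?_⟩
  unfold MVal
  omega

lemma getD_of_sum_zero {l : List ℕ} (h : l.sum = 0) (i : ℕ) : l.getD i 0 = 0 := by
  rw [List.sum_eq_zero_iff] at h
  by_cases hi : i < l.length
  · rw [List.getD_eq_getElem l 0 hi]
    exact h _ (List.getElem_mem hi)
  · exact List.getD_eq_default l 0 (le_of_not_gt hi)

lemma MVal_pos {l : List ℕ} (h : l.sum ≠ 0) : 1 ≤ MVal l := by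
  have h1 := (lPar_ne_zero_iff l).2 h
  have h2 := lPar_eq l
  unfold MVal
  omega

lemma buildF_of_sum_zero {l : List ℕ} (h : l.sum = 0) : ∀ n i j, buildF n l i j = 0 := by
  intro n i j
  cases n with
  | zero => rfl
  | succ n =>
    show (if j < (step l).getD i 0 then buildF n (step l) i j else MVal l) = 0
    have hM := (counts_of_sum_zero h).2.2.2
    have hstep : step l = l := by
      have hc := counts_of_sum_zero h
      unfold step
      rw [if_neg (by omega), if_neg (by omega), if_neg (by omega), if_neg (by omega)]
    rw [hstep, getD_of_sum_zero h, if_neg (by omega), hM]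

/-- bar tableau facts for the empty (all-zero) shape -/
lemma flat_tableau {l : List ℕ} (h : l.sum = 0) (f : ℕ → ℕ → ℕ)
    (hf : ∀ i j, f i j = 0) :
    IsBarTableau l f ∧ valueSet l f = Finset.Icc 1 (MVal l) := by
  have hg : ∀ i, l.getD i 0 = 0 := getD_of_sum_zero h
  have hcell : ∀ v, cellCount l f v = 0 := by
    intro v
    unfold cellCount
    apply Finset.sum_eq_zero
    intro i _
    rw [hg i]
    simp
  have hrows : ∀ v, rowsOf l f v = ∅ := by
    intro v
    unfold rowsOf
    rw [Finset.filter_eq_empty_iff]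
    intro i _
    rw [hg i]
    simp
  have hpart : ∀ v i, partialCount l f v i = 0 := by
    intro v i
    unfold partialCount
    rw [hg i]
    simp
  constructor
  · refine ⟨?_, ?_, ?_, ?_, ?_⟩
    · intro i j _ hj
      rw [hg i] at hj
      omega
    · intro i j j' _ _ hj'
      rw [hg i] at hj'
      omega
    · intro v _
      exact Or.inl (hcell v)
    · intro v _
      rw [hrows v]
      simp
    · intro v i i' _ _ _ hp
      rw [hpart v i] at hp
      omega
  · rw [(counts_of_sum_zero h).2.2.2]
    unfold valueSet
    rw [Finset.Icc_eq_empty (by omega)]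
    rw [Finset.eq_empty_iff_forall_notMem]
    intro x hx
    rw [Finset.mem_biUnion] at hx
    obtain ⟨i, _, hx⟩ := hx
    rw [hg i] at hx
    simp at hx

lemma good_getD_ne {l : List ℕ} (hg : good l) {i i' : ℕ} (hii : i ≠ i')
    (hi : i < l.length) (hi' : i' < l.length)
    (h0 : l.getD i 0 ≠ 0) : l.getD i 0 ≠ l.getD i' 0 := by
  intro heq
  set x := l.getD i 0 with hx
  have hmem : x ∈ l := by
    rw [hx, List.getD_eq_getElem l 0 hi]
    exact List.getElem_mem hi
  have hcount := good_count_one hg hmem h0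
  rw [← card_filter_getD_eq] at hcount
  have hsub : {i, i'} ⊆ (Finset.range l.length).filter (fun k => l.getD k 0 = x) := by
    intro k hk
    rw [Finset.mem_insert, Finset.mem_singleton] at hk
    rcases hk with rfl | rfl
    · exact Finset.mem_filter.2 ⟨Finset.mem_range.2 hi, rfl⟩
    · exact Finset.mem_filter.2 ⟨Finset.mem_range.2 hi', heq.symm⟩
  have := Finset.card_le_card hsub
  rw [Finset.card_insert_of_notMem (by simpa using hii), Finset.card_singleton] at this
  omega

lemma build_spec : ∀ n (l : List ℕ), l.sum ≤ n → good l →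
    IsBarTableau l (buildF n l) ∧
    valueSet l (buildF n l) = Finset.Icc 1 (MVal l) ∧
    (∀ i j, buildF n l i j ≤ MVal l) := by
  intro n
  induction n with
  | zero =>
    intro l hsum _
    have h0 : l.sum = 0 := by omega
    obtain ⟨h1, h2⟩ := flat_tableau h0 (buildF 0 l) (fun _ _ => rfl)
    exact ⟨h1, h2, fun i j => Nat.zero_le _⟩
  | succ n IH =>
    intro l hsum hg
    by_cases h0 : l.sum = 0
    · obtain ⟨h1, h2⟩ := flat_tableau h0 (buildF (n+1) l) (buildF_of_sum_zero h0 (n+1))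
      refine ⟨h1, h2, fun i j => ?_⟩
      rw [buildF_of_sum_zero h0 (n+1) i j]
      exact Nat.zero_le _
    have hne : lPar l ≠ 0 := (lPar_ne_zero_iff l).2 h0
    have S := step_spec hg hne
    set l' := step l with hl'
    set M := MVal l with hM
    have hM1 : 1 ≤ M := MVal_pos h0
    have hM' : MVal l' = M - 1 := by
      have := S.mval
      omega
    obtain ⟨IH1, IH2, IH3⟩ := IH l' (by have := S.lt; omega) S.good'
    set f' := buildF n l' with hf'
    set f := buildF (n+1) l with hf
    have hfdef : ∀ i j, f i j = if j < l'.getD i 0 then f' i j else M := fun i j => rfl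
    have hbound' : ∀ i j, f' i j ≤ M - 1 := by
      intro i j
      have h1 := IH3 i j
      omega
    have hFlow : ∀ i j, j < l'.getD i 0 → f i j = f' i j := by
      intro i j hj
      rw [hfdef i j, if_pos hj]
    have hFhigh : ∀ i j, l'.getD i 0 ≤ j → f i j = M := by
      intro i j hj
      rw [hfdef i j, if_neg (by omega)]
    have hbound : ∀ i j, f i j ≤ M := by
      intro i j
      rw [hfdef i j]
      split
      · have h1 := hbound' i j
        omega
      · exact le_refl M
    have hfiltlo : ∀ v, v < M → ∀ i,
        (Finset.range (l.getD i 0)).filter (fun j => f i j = v)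
          = (Finset.range (l'.getD i 0)).filter (fun j => f' i j = v) := by
      intro v hv i
      ext j
      simp only [Finset.mem_filter, Finset.mem_range]
      constructor
      · rintro ⟨hj, hfv⟩
        by_cases hj' : j < l'.getD i 0
        · exact ⟨hj', (hFlow i j hj') ▸ hfv⟩
        · rw [hFhigh i j (by omega)] at hfv
          omega
      · rintro ⟨hj', hfv⟩
        exact ⟨lt_of_lt_of_le hj' (S.le i), (hFlow i j hj').trans hfv⟩
    have hcell_lo : ∀ v, v < M → cellCount l f v = cellCount l' f' v := by
      intro v hv
      unfold cellCount
      rw [S.len]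
      exact Finset.sum_congr rfl (fun i _ => by rw [hfiltlo v hv i])
    have hfilthi : ∀ i,
        (Finset.range (l.getD i 0)).filter (fun j => f i j = M)
          = Finset.range (l.getD i 0) \ Finset.range (l'.getD i 0) := by
      intro i
      ext j
      simp only [Finset.mem_filter, Finset.mem_range, Finset.mem_sdiff]
      constructor
      · rintro ⟨hj, hfv⟩
        refine ⟨hj, fun hj' => ?_⟩
        rw [hFlow i j hj'] at hfv
        have h1 := hbound' i j
        omega
      · rintro ⟨hj, hj'⟩
        exact ⟨hj, hFhigh i j (by omega)⟩
    have hcell_hi : cellCount l f M = l.sum - l'.sum := by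
      unfold cellCount
      have h1 : ∀ i ∈ Finset.range l.length,
          ((Finset.range (l.getD i 0)).filter (fun j => f i j = M)).card
            = l.getD i 0 - l'.getD i 0 := by
        intro i _
        rw [hfilthi i, Finset.card_sdiff_of_subset (by
          intro x hx
          rw [Finset.mem_range] at *
          exact lt_of_lt_of_le hx (S.le i)), Finset.card_range, Finset.card_range]
      rw [Finset.sum_congr rfl h1,
        Finset.sum_tsub_distrib _ (fun i _ => S.le i),
        ← sum_eq_sum_getD]
      congr 1
      rw [sum_eq_sum_getD l', S.len]
    have hcell_big : ∀ v, M < v → cellCount l f v = 0 := by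
      intro v hv
      unfold cellCount
      apply Finset.sum_eq_zero
      intro i _
      rw [Finset.card_eq_zero, Finset.filter_eq_empty_iff]
      intro j _
      have h1 := hbound i j
      omega
    have hpart_lo : ∀ v, v < M → ∀ i, partialCount l f v i = partialCount l' f' v i := by
      intro v hv i
      unfold partialCount
      congr 1
      ext j
      simp only [Finset.mem_filter, Finset.mem_range]
      constructor
      · rintro ⟨hj, hfv⟩
        by_cases hj' : j < l'.getD i 0
        · exact ⟨hj', (hFlow i j hj') ▸ hfv⟩
        · rw [hFhigh i j (by omega)] at hfv
          omega
      · rintro ⟨hj', hfv⟩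
        exact ⟨lt_of_lt_of_le hj' (S.le i), by rw [hFlow i j hj']; exact hfv⟩
    have hpart_hi : ∀ v, M ≤ v → ∀ i, partialCount l f v i = l.getD i 0 := by
      intro v hv i
      unfold partialCount
      rw [Finset.filter_true_of_mem, Finset.card_range]
      intro j _
      have h1 := hbound i j
      omega
    have hrows_lo : ∀ v, v < M → rowsOf l f v = rowsOf l' f' v := by
      intro v hv
      unfold rowsOf
      rw [S.len]
      apply Finset.filter_congr
      intro i _
      simp only [Finset.mem_range, eq_iff_iff]
      constructor
      · rintro ⟨j, hj, hfv⟩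
        by_cases hj' : j < l'.getD i 0
        · exact ⟨j, hj', (hFlow i j hj') ▸ hfv⟩
        · rw [hFhigh i j (by omega)] at hfv
          omega
      · rintro ⟨j, hj, hfv⟩
        exact ⟨j, lt_of_lt_of_le hj (S.le i), (hFlow i j hj).trans hfv⟩
    have hrows_hi : rowsOf l f M
        = (Finset.range l.length).filter (fun i => l'.getD i 0 < l.getD i 0) := by
      unfold rowsOf
      apply Finset.filter_congr
      intro i _
      simp only [Finset.mem_range, eq_iff_iff]
      constructor
      · rintro ⟨j, hj, hfv⟩
        by_cases hj' : j < l'.getD i 0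
        · rw [hFlow i j hj'] at hfv
          have h1 := hbound' i j
          omega
        · omega
      · intro hlt
        exact ⟨l'.getD i 0, hlt, hFhigh i _ (le_refl _)⟩
    have hrows_big : ∀ v, M < v → rowsOf l f v = ∅ := by
      intro v hv
      unfold rowsOf
      rw [Finset.filter_eq_empty_iff]
      rintro i _ ⟨j, _, hfv⟩
      have h1 := hbound i j
      omega
    refine ⟨⟨?_, ?_, ?_, ?_, ?_⟩, ?_, hbound⟩
    · -- positivity
      intro i j hi hj
      by_cases hj' : j < l'.getD i 0
      · rw [hFlow i j hj']
        exact IH1.1 i j (S.len ▸ hi) hj'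
      · rw [hFhigh i j (by omega)]
        omega
    · -- row monotone
      intro i j j' hi hjj hj'
      by_cases hj2 : j' < l'.getD i 0
      · rw [hFlow i j (by omega), hFlow i j' hj2]
        exact IH1.2.1 i j j' (S.len ▸ hi) hjj hj2
      · rw [hFhigh i j' (by omega)]
        exact hbound i j
    · -- odd cells
      intro v hv
      rcases lt_trichotomy v M with h | h | h
      · rw [hcell_lo v h]
        exact IH1.2.2.1 v hv
      · subst h
        right
        rw [hcell_hi]
        exact S.oddrem
      · left
        exact hcell_big v h
    · -- rows
      intro v hv
      rcases lt_trichotomy v M with h | h | h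
      · rw [hrows_lo v h]
        refine ⟨(IH1.2.2.2.1 v hv).1, fun hc i hi => ?_⟩
        have h2 := (IH1.2.2.2.1 v hv).2 hc i hi
        obtain ⟨j, hj, -⟩ := (Finset.mem_filter.1 hi).2
        rw [Finset.mem_range] at hj
        rw [hFlow i 0 (by omega)]
        exact h2
      · subst h
        rw [hrows_hi]
        refine ⟨S.Rcard, fun hc i hi => ?_⟩
        have h2 := S.Rzero hc i hi
        exact hFhigh i 0 (by omega)
      · rw [hrows_big v h]
        simp
    · -- partial counts distinct
      intro v i i' hv hii hi' hp hp'
      rcases lt_or_ge v M with h | h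
      · rw [hpart_lo v h i, hpart_lo v h i'] at *
        exact IH1.2.2.2.2 v i i' hv hii (S.len ▸ hi') hp hp'
      · rw [hpart_hi v h i, hpart_hi v h i'] at *
        exact good_getD_ne hg (by omega) (by omega) hi' hp
    · -- value set
      have hvs : valueSet l f = valueSet l' f' ∪ {M} := by
        ext v
        unfold valueSet
        simp only [Finset.mem_union, Finset.mem_singleton, Finset.mem_biUnion,
          Finset.mem_image, Finset.mem_range]
        constructor
        · rintro ⟨i, hi, j, hj, hfv⟩
          by_cases hj' : j < l'.getD i 0
          · exact Or.inl ⟨i, S.len ▸ hi, j, hj', (hFlow i j hj') ▸ hfv⟩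
          · right
            rw [← hfv, hFhigh i j (by omega)]
        · rintro (⟨i, hi, j, hj, hfv⟩ | rfl)
          · exact ⟨i, S.len ▸ hi, j, by have := S.le i; omega, (hFlow i j hj).trans hfv⟩
          · obtain ⟨i, hi⟩ := S.Rne
            rw [Finset.mem_filter, Finset.mem_range] at hi
            exact ⟨i, hi.1, l'.getD i 0, hi.2, hFhigh i _ (le_refl _)⟩
      rw [hvs, IH2, hM']
      ext x
      simp only [Finset.mem_union, Finset.mem_singleton, Finset.mem_Icc]
      omega

/-! ### the lower bound -/

open Classical in
lemma lower_bound (lam : List ℕ) (hpos : ∀ x ∈ lam, 0 < x) (f : ℕ → ℕ → ℕ)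
    (hT : IsBarTableau lam f) :
    max (oP lam) (ePar lam + lam.length % 2) ≤ barNum lam f := by
  obtain ⟨h1, h2, h3, h4, h5⟩ := hT
  set len := lam.length with hlen
  set V := valueSet lam f with hV
  set mlt : ℕ → ℕ → ℕ :=
    fun i v => ((Finset.range (lam.getD i 0)).filter (fun j => f i j = v)).card with hmlt
  have hrow_pos : ∀ i < len, 0 < lam.getD i 0 := by
    intro i hi
    refine hpos _ ?_
    rw [List.getD_eq_getElem lam 0 hi]
    exact List.getElem_mem hi
  -- membership of values
  have hVmem : ∀ i j, i < len → j < lam.getD i 0 → f i j ∈ V := by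
    intro i j hi hj
    rw [hV]
    unfold valueSet
    rw [Finset.mem_biUnion]
    exact ⟨i, Finset.mem_range.2 hi, Finset.mem_image.2
      ⟨j, Finset.mem_range.2 hj, rfl⟩⟩
  have hV1 : ∀ v ∈ V, 1 ≤ v := by
    intro v hv
    rw [hV] at hv
    unfold valueSet at hv
    rw [Finset.mem_biUnion] at hv
    obtain ⟨i, hi, hv⟩ := hv
    rw [Finset.mem_image] at hv
    obtain ⟨j, hj, rfl⟩ := hv
    exact h1 i j (Finset.mem_range.1 hi) (Finset.mem_range.1 hj)
  have hcellsum : ∀ v, cellCount lam f v = ∑ i ∈ Finset.range len, mlt i v :=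
    fun v => rfl
  have hmlt_zero : ∀ i v, len ≤ i → mlt i v = 0 := by
    intro i v hi
    rw [hmlt]
    simp only
    rw [List.getD_eq_default lam 0 hi]
    simp
  have hrowsOf : ∀ v i, i ∈ rowsOf lam f v ↔ (i < len ∧ mlt i v ≠ 0) := by
    intro v i
    unfold rowsOf
    rw [Finset.mem_filter, Finset.mem_range]
    constructor
    · rintro ⟨hi, j, hj, hfv⟩
      refine ⟨hi, ?_⟩
      rw [hmlt]
      simp only
      rw [← Nat.pos_iff_ne_zero, Finset.card_pos, Finset.filter_nonempty_iff]
      exact ⟨j, hj, hfv⟩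
    · rintro ⟨hi, hm⟩
      refine ⟨hi, ?_⟩
      rw [hmlt] at hm
      simp only at hm
      rw [← Nat.pos_iff_ne_zero, Finset.card_pos, Finset.filter_nonempty_iff] at hm
      obtain ⟨j, hj, hfv⟩ := hm
      exact ⟨j, hj, hfv⟩
  have hrowlen : ∀ i, i < len → lam.getD i 0 = ∑ v ∈ V, mlt i v := by
    intro i hi
    have := Finset.card_eq_sum_card_fiberwise
      (f := fun j => f i j) (s := Finset.range (lam.getD i 0)) (t := V)
      (fun j hj => hVmem i j hi (Finset.mem_range.1 hj))
    rw [Finset.card_range] at this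
    exact this
  have hcV : ∀ v ∈ V, Odd (cellCount lam f v) := by
    intro v hv
    rcases h3 v (hV1 v hv) with h | h
    · exfalso
      rw [hV] at hv
      unfold valueSet at hv
      rw [Finset.mem_biUnion] at hv
      obtain ⟨i, hi, hv⟩ := hv
      rw [Finset.mem_image] at hv
      obtain ⟨j, hj, rfl⟩ := hv
      have hmpos : 0 < mlt i (f i j) := by
        rw [hmlt]
        simp only
        rw [Finset.card_pos, Finset.filter_nonempty_iff]
        exact ⟨j, hj, rfl⟩
      have := Finset.single_le_sum (f := fun k => mlt k (f i j))
        (fun k _ => Nat.zero_le _) hi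
      rw [← hcellsum (f i j), h] at this
      have h6 : mlt i (f i j) ≤ 0 := by simpa using this
      omega
    · exact h
  -- unique odd row for each value
  have huniq : ∀ v ∈ V, ∀ i i', Odd (mlt i v) → Odd (mlt i' v) → i = i' := by
    intro v hv i i' hoi hoi'
    by_contra hne
    have hi : i < len := by
      by_contra h
      rw [hmlt_zero i v (le_of_not_gt h)] at hoi
      simp [Nat.odd_iff] at hoi
    have hi' : i' < len := by
      by_contra h
      rw [hmlt_zero i' v (le_of_not_gt h)] at hoi'
      simp [Nat.odd_iff] at hoi'
    have hmem : i ∈ rowsOf lam f v := (hrowsOf v i).2 ⟨hi, by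
      rw [Nat.odd_iff] at hoi; omega⟩
    have hmem' : i' ∈ rowsOf lam f v := (hrowsOf v i').2 ⟨hi', by
      rw [Nat.odd_iff] at hoi'; omega⟩
    have hsub : {i, i'} ⊆ rowsOf lam f v := by
      intro k hk
      rw [Finset.mem_insert, Finset.mem_singleton] at hk
      rcases hk with rfl | rfl
      · exact hmem
      · exact hmem'
    have hcard2 : ({i, i'} : Finset ℕ).card = 2 := by
      rw [Finset.card_insert_of_notMem (by simpa using hne), Finset.card_singleton]
    have heq : rowsOf lam f v = {i, i'} := by
      refine (Finset.eq_of_subset_of_card_le hsub ?_).symm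
      rw [hcard2]
      exact (h4 v (hV1 v hv)).1
    have hcc : cellCount lam f v = mlt i v + mlt i' v := by
      have hsubrange : rowsOf lam f v ⊆ Finset.range len := fun k hk =>
        Finset.mem_range.2 ((hrowsOf v k).1 hk).1
      have hzero : ∀ x ∈ Finset.range len, x ∉ rowsOf lam f v → mlt x v = 0 := by
        intro x hx hnx
        by_contra hmx
        exact hnx ((hrowsOf v x).2 ⟨Finset.mem_range.1 hx, hmx⟩)
      rw [hcellsum, ← Finset.sum_subset hsubrange hzero, heq, Finset.sum_pair hne]
    have hodd := hcV v hv
    rw [hcc, Nat.odd_iff] at hodd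
    rw [Nat.odd_iff] at hoi hoi'
    omega
  have hex : ∀ v ∈ V, ∃ i ∈ Finset.range len, Odd (mlt i v) := by
    intro v hv
    by_contra hc
    push_neg at hc
    have : Even (cellCount lam f v) := by
      rw [hcellsum]
      exact Finset.even_sum _ (fun i hi => Nat.not_odd_iff_even.1 (hc i hi))
    have hodd := hcV v hv
    rw [Nat.odd_iff] at hodd
    rw [Nat.even_iff] at this
    omega
  set O : ℕ → Finset ℕ := fun i => V.filter (fun v => Odd (mlt i v)) with hO
  have hVcard : V.card = ∑ i ∈ Finset.range len, (O i).card := by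
    have hcover : V = (Finset.range len).biUnion O := by
      ext v
      rw [Finset.mem_biUnion]
      constructor
      · intro hv
        obtain ⟨i, hi, hoi⟩ := hex v hv
        exact ⟨i, hi, Finset.mem_filter.2 ⟨hv, hoi⟩⟩
      · rintro ⟨i, _, hv⟩
        exact (Finset.mem_filter.1 hv).1
    rw [hcover]
    apply Finset.card_biUnion
    intro i _ i' _ hne
    show Disjoint (V.filter (fun v => Odd (mlt i v))) (V.filter (fun v => Odd (mlt i' v)))
    rw [Finset.disjoint_filter]
    intro v hv ho ho'
    exact hne (huniq v hv i i' ho ho')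
  have hOpar : ∀ i, i < len → (O i).card % 2 = lam.getD i 0 % 2 := by
    intro i hi
    have : ∑ v ∈ V, mlt i v % 2 = ∑ v ∈ V, (if Odd (mlt i v) then 1 else 0) := by
      apply Finset.sum_congr rfl
      intro v _
      by_cases h : Odd (mlt i v)
      · rw [if_pos h]
        rw [Nat.odd_iff] at h
        omega
      · rw [if_neg h]
        rw [Nat.odd_iff] at h
        omega
    have h2 : (O i).card = ∑ v ∈ V, (if Odd (mlt i v) then 1 else 0) :=
      Finset.card_filter _ _
    calc (O i).card % 2
        = (∑ v ∈ V, (if Odd (mlt i v) then 1 else 0)) % 2 := by rw [h2]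
      _ = (∑ v ∈ V, mlt i v % 2) % 2 := by rw [this]
      _ = (∑ v ∈ V, mlt i v) % 2 := (Finset.sum_nat_mod V 2 (mlt i)).symm
      _ = lam.getD i 0 % 2 := by rw [← hrowlen i hi]
  -- the partner injection for null even rows
  set rowOf : ℕ → ℕ := fun v =>
    if h : ((Finset.range len).filter (fun i => Odd (mlt i v))).Nonempty
    then h.choose else 0 with hrowOf
  have hrowOf_spec : ∀ v ∈ V, rowOf v < len ∧ Odd (mlt (rowOf v) v) := by
    intro v hv
    obtain ⟨i, hi, hoi⟩ := hex v hv
    have hne : ((Finset.range len).filter (fun i => Odd (mlt i v))).Nonempty :=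
      ⟨i, Finset.mem_filter.2 ⟨hi, hoi⟩⟩
    simp only [hrowOf, dif_pos hne]
    have := hne.choose_spec
    rw [Finset.mem_filter, Finset.mem_range] at this
    exact this
  set N := (Finset.range len).filter (fun i => O i = ∅) with hN
  have hNspec : ∀ i ∈ N, rowOf (f i 0) ∈ Finset.range len \ N ∧ f (rowOf (f i 0)) 0 = f i 0 := by
    intro i hi
    rw [hN, Finset.mem_filter, Finset.mem_range] at hi
    obtain ⟨hilen, hiO⟩ := hi
    have hl0 : 0 < lam.getD i 0 := hrow_pos i hilen
    set v := f i 0 with hv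
    have hvV : v ∈ V := hVmem i 0 hilen hl0
    have hm1 : mlt i v ≠ 0 := by
      rw [hmlt]
      simp only
      rw [← Nat.pos_iff_ne_zero, Finset.card_pos, Finset.filter_nonempty_iff]
      exact ⟨0, Finset.mem_range.2 hl0, rfl⟩
    have hnotodd : ¬ Odd (mlt i v) := by
      intro ho
      have : v ∈ O i := Finset.mem_filter.2 ⟨hvV, ho⟩
      rw [hiO] at this
      simp at this
    obtain ⟨hrlen, hrodd⟩ := hrowOf_spec v hvV
    have hri : rowOf v ≠ i := by
      intro h
      rw [h] at hrodd
      exact hnotodd hrodd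
    -- rowsOf has card 2
    have hmemi : i ∈ rowsOf lam f v := (hrowsOf v i).2 ⟨hilen, hm1⟩
    have hmemr : rowOf v ∈ rowsOf lam f v := (hrowsOf v (rowOf v)).2 ⟨hrlen, by
      rw [Nat.odd_iff] at hrodd; omega⟩
    have hsub : {i, rowOf v} ⊆ rowsOf lam f v := by
      intro k hk
      rw [Finset.mem_insert, Finset.mem_singleton] at hk
      rcases hk with rfl | rfl
      · exact hmemi
      · exact hmemr
    have hcard2 : (rowsOf lam f v).card = 2 := by
      have hle := (h4 v (hV1 v hvV)).1
      have hge : 2 ≤ (rowsOf lam f v).card := by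
        calc 2 = ({i, rowOf v} : Finset ℕ).card := by
              rw [Finset.card_insert_of_notMem (by simpa using fun h => hri h.symm),
                Finset.card_singleton]
          _ ≤ _ := Finset.card_le_card hsub
      omega
    have hstart := (h4 v (hV1 v hvV)).2 hcard2 (rowOf v) hmemr
    refine ⟨Finset.mem_sdiff.2 ⟨Finset.mem_range.2 hrlen, ?_⟩, hstart⟩
    rw [hN, Finset.mem_filter]
    rintro ⟨-, hOr⟩
    have : v ∈ O (rowOf v) := Finset.mem_filter.2 ⟨hvV, hrodd⟩
    rw [hOr] at this
    simp at this
  have hNinj : N.card ≤ (Finset.range len \ N).card := by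
    apply Finset.card_le_card_of_injOn (fun i => rowOf (f i 0))
      (fun i hi => (hNspec i hi).1)
    intro i1 hi1 i2 hi2 heq0
    have heq : rowOf (f i1 0) = rowOf (f i2 0) := heq0
    simp only [Finset.mem_coe] at hi1 hi2
    by_contra hne12
    have e1 := (hNspec i1 hi1).2
    have e2 := (hNspec i2 hi2).2
    rw [heq] at e1
    -- so f i1 0 = f i2 0 =: v
    have hv12 : f i1 0 = f i2 0 := e1.symm.trans e2
    -- three distinct rows contain v
    have hmem1 : i1 ∈ rowsOf lam f (f i1 0) := by
      rw [hN, Finset.mem_filter, Finset.mem_range] at hi1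
      refine (hrowsOf _ i1).2 ⟨hi1.1, ?_⟩
      rw [hmlt]
      simp only
      rw [← Nat.pos_iff_ne_zero, Finset.card_pos, Finset.filter_nonempty_iff]
      exact ⟨0, Finset.mem_range.2 (hrow_pos i1 hi1.1), rfl⟩
    have hmem2 : i2 ∈ rowsOf lam f (f i1 0) := by
      rw [hN, Finset.mem_filter, Finset.mem_range] at hi2
      refine (hrowsOf _ i2).2 ⟨hi2.1, ?_⟩
      rw [hmlt]
      simp only
      rw [← Nat.pos_iff_ne_zero, Finset.card_pos, Finset.filter_nonempty_iff]
      exact ⟨0, Finset.mem_range.2 (hrow_pos i2 hi2.1), hv12.symm⟩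
    have hlen1 : i1 < len := by
      rw [hN, Finset.mem_filter, Finset.mem_range] at hi1
      exact hi1.1
    have hvV : f i1 0 ∈ V := hVmem i1 0 hlen1 (hrow_pos i1 hlen1)
    obtain ⟨hrlen, hrodd⟩ := hrowOf_spec _ hvV
    have hmem3 : rowOf (f i1 0) ∈ rowsOf lam f (f i1 0) :=
      (hrowsOf _ _).2 ⟨hrlen, by rw [Nat.odd_iff] at hrodd; omega⟩
    have hr1 : rowOf (f i1 0) ≠ i1 := by
      intro h
      have h' := (Finset.mem_sdiff.1 (hNspec i1 hi1).1).2
      rw [h] at h'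
      exact h' hi1
    have hr2 : rowOf (f i1 0) ≠ i2 := by
      intro h
      have h' := (Finset.mem_sdiff.1 (hNspec i1 hi1).1).2
      rw [h] at h'
      exact h' hi2
    have hsub3 : {i1, i2, rowOf (f i1 0)} ⊆ rowsOf lam f (f i1 0) := by
      intro k hk
      simp only [Finset.mem_insert, Finset.mem_singleton] at hk
      rcases hk with rfl | rfl | rfl
      · exact hmem1
      · exact hmem2
      · exact hmem3
    have hcard3 : ({i1, i2, rowOf (f i1 0)} : Finset ℕ).card = 3 := by
      rw [Finset.card_insert_of_notMem (by
          simp only [Finset.mem_insert, Finset.mem_singleton]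
          push_neg
          exact ⟨hne12, fun h => hr1 h.symm⟩),
        Finset.card_insert_of_notMem (by
          simp only [Finset.mem_singleton]
          exact fun h => hr2 h.symm),
        Finset.card_singleton]
    have := Finset.card_le_card hsub3
    have h4' := (h4 _ (hV1 _ hvV)).1
    omega
  -- final counting
  set A := (Finset.range len).filter (fun i => lam.getD i 0 % 2 = 1) with hA
  set B := (Finset.range len).filter (fun i => lam.getD i 0 % 2 = 0) with hB
  have hoA : oP lam = A.card := by
    unfold oP
    rw [countP_eq_card_filter_range]
    apply congrArg
    apply Finset.filter_congr
    intro i _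
    simp
  have heB : ePar lam = B.card := by
    unfold ePar
    rw [countP_eq_card_filter_range]
    apply congrArg
    apply Finset.filter_congr
    intro i hi
    rw [Finset.mem_range] at hi
    have := hrow_pos i hi
    simp only [decide_eq_true_eq, eq_iff_iff]
    constructor
    · rintro ⟨-, h⟩
      exact h
    · intro h
      exact ⟨by omega, h⟩
  have hNB : N ⊆ B := by
    intro i hi
    rw [hN, Finset.mem_filter] at hi
    rw [hB, Finset.mem_filter]
    refine ⟨hi.1, ?_⟩
    have hilen := Finset.mem_range.1 hi.1
    have hpar := hOpar i hilen
    rw [hi.2, Finset.card_empty] at hpar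
    omega
  have hBcompl : B = (Finset.range len).filter (fun i => ¬ lam.getD i 0 % 2 = 1) := by
    rw [hB]
    apply Finset.filter_congr
    intro i _
    by_cases h : lam.getD i 0 % 2 = 1 <;> simp [h] <;> omega
  have hABcard : A.card + B.card = len := by
    rw [hBcompl, hA, Finset.card_filter_add_card_filter_not, Finset.card_range]
  have hdisjU : Disjoint A (B \ N) := by
    have : Disjoint A B := by
      rw [hA, hB, Finset.disjoint_filter]
      intro i _ h1 h2
      omega
    exact this.mono_right (Finset.sdiff_subset)
  have hsubU : A ∪ (B \ N) ⊆ Finset.range len := by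
    intro i hi
    rw [Finset.mem_union] at hi
    rcases hi with hi | hi
    · exact Finset.mem_filter.1 hi |>.1
    · exact Finset.mem_filter.1 (Finset.mem_sdiff.1 hi).1 |>.1
  have hA1 : ∀ i ∈ A, 1 ≤ (O i).card := by
    intro i hi
    rw [hA, Finset.mem_filter, Finset.mem_range] at hi
    have hpar := hOpar i hi.1
    have h2 := hi.2
    omega
  have hB2 : ∀ i ∈ B \ N, 2 ≤ (O i).card := by
    intro i hi
    rw [Finset.mem_sdiff] at hi
    obtain ⟨hiB, hiN⟩ := hi
    rw [hB, Finset.mem_filter, Finset.mem_range] at hiB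
    have hpar := hOpar i hiB.1
    have hcne : (O i).card ≠ 0 := by
      intro h
      rw [Finset.card_eq_zero] at h
      exact hiN (by
        rw [hN, Finset.mem_filter]
        exact ⟨Finset.mem_range.2 hiB.1, h⟩)
    have h2 := hiB.2
    omega
  have hsumA : A.card * 1 ≤ ∑ i ∈ A, (O i).card := by
    have := Finset.card_nsmul_le_sum A (fun i => (O i).card) 1 hA1
    simpa using this
  have hsumB : (B \ N).card * 2 ≤ ∑ i ∈ B \ N, (O i).card := by
    have := Finset.card_nsmul_le_sum (B \ N) (fun i => (O i).card) 2 hB2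
    simpa [smul_eq_mul] using this
  have hsumU : ∑ i ∈ A, (O i).card + ∑ i ∈ B \ N, (O i).card
      ≤ ∑ i ∈ Finset.range len, (O i).card := by
    rw [← Finset.sum_union hdisjU]
    exact Finset.sum_le_sum_of_subset hsubU
  have hBN : (B \ N).card = B.card - N.card := Finset.card_sdiff_of_subset hNB
  have hNle : N.card ≤ B.card := Finset.card_le_card hNB
  have hNrange : (Finset.range len \ N).card = len - N.card := by
    rw [Finset.card_sdiff_of_subset (by
      intro i hi
      exact Finset.mem_filter.1 hi |>.1), Finset.card_range]
  have hNlen : N.card ≤ len := by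
    have := Finset.card_le_card (show N ⊆ Finset.range len from fun i hi =>
      Finset.mem_filter.1 hi |>.1)
    rwa [Finset.card_range] at this
  have hbar : barNum lam f = ∑ i ∈ Finset.range len, (O i).card := hVcard
  rw [hbar, hoA, heB]
  omega


/-- Clifford's formula: the srank of a strict partition with `o` odd parts and
`e` even parts is `max(o, e + (ℓ(λ) mod 2))`. -/
theorem srank_formula (lam : List ℕ) (hstrict : lam.Chain' (· > ·))
    (hpos : ∀ x ∈ lam, 0 < x) :
    srank lam = max (lam.countP (fun x => decide (x % 2 = 1)))
      (lam.countP (fun x => decide (x % 2 = 0)) + lam.length % 2) := by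
  have hnodup : lam.Nodup := by
    have := List.isChain_iff_pairwise.1 hstrict
    exact this.imp (fun h => Nat.ne_of_gt h)
  have hgood : good lam := (List.filter_sublist (l := lam)).nodup hnodup
  have hlP : lPar lam = lam.length := by
    unfold lPar
    rw [List.countP_eq_length]
    intro x hx
    have := hpos x hx
    simp only [decide_eq_true_eq, ne_eq]
    omega
  have heP : ePar lam = lam.countP (fun x => decide (x % 2 = 0)) := by
    unfold ePar
    apply List.countP_congr
    intro x hx
    have := hpos x hx
    simp only [decide_eq_true_eq, ne_eq]
    constructor
    · omega
    · omega
  set M := MVal lam with hM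
  have hMval : M = max (lam.countP (fun x => decide (x % 2 = 1)))
      (lam.countP (fun x => decide (x % 2 = 0)) + lam.length % 2) := by
    rw [hM]
    unfold MVal
    rw [hlP, heP]
    rfl
  obtain ⟨hT, hVS, -⟩ := build_spec lam.sum lam (le_refl _) hgood
  have hbn : barNum lam (buildF lam.sum lam) = M := by
    unfold barNum
    rw [hVS, Nat.card_Icc]
    omega
  have hmem : M ∈ {k | ∃ f, IsBarTableau lam f ∧ barNum lam f = k} :=
    ⟨buildF lam.sum lam, hT, hbn⟩
  have hub : srank lam ≤ M := Nat.sInf_le hmem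
  have hlb : M ≤ srank lam := by
    apply le_csInf ⟨M, hmem⟩
    rintro k ⟨f, hTf, rfl⟩
    have := lower_bound lam hpos f hTf
    rw [hM]
    unfold MVal
    rw [hlP, heP]
    calc max (lam.countP fun x => decide (x % 2 = 1))
          ((lam.countP fun x => decide (x % 2 = 0)) + lam.length % 2)
        = max (oP lam) (ePar lam + lam.length % 2) := by rw [heP]; rfl
      _ ≤ barNum lam f := this
  rw [← hMval]
  omega
end

section
/- Let λ = (λ_1, λ_2) be a strict partition whose two parts have the same parity, and let σ = (σ_1, σ_2) be a partition of |λ| into two odd parts with σ_2 < λ_2. Then there are exactly two bar tableaux of shape λ and type σ, and their weights sum to zero. -/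
section Helpers


lemma sort_coe (l : List ℕ) (h : l.Pairwise (· ≤ ·)) : (↑l : Multiset ℕ).sort (· ≤ ·) = l := by
  apply List.Perm.eq_of_pairwise' (Multiset.pairwise_sort ..) h
  rw [← Multiset.coe_eq_coe, Multiset.sort_eq]

def Fxy (x y : ℕ) : ℕ → ℕ → ℕ := fun i j => if i = 0 then (if j < x then 1 else 2) else (if j < y then 1 else 2)

lemma cardIf (c n v : ℕ) : ((Finset.range n).filter (fun j => (if j < c then (1:ℕ) else 2) = v)).card
    = if v = 1 then min c n else if v = 2 then n - min c n else 0 := by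
  split_ifs with h1 h2
  · subst h1
    have : ((Finset.range n).filter (fun j => (if j < c then (1:ℕ) else 2) = 1)) = Finset.range (min c n) := by
      ext j; simp only [Finset.mem_filter, Finset.mem_range, lt_min_iff]
      by_cases hj : j < c <;> simp [hj] <;> omega
    rw [this, Finset.card_range]
  · subst h2
    have : ((Finset.range n).filter (fun j => (if j < c then (1:ℕ) else 2) = 2))
        = (Finset.range n) \ Finset.range (min c n) := by
      ext j; simp only [Finset.mem_filter, Finset.mem_range, Finset.mem_sdiff, lt_min_iff]
      by_cases hj : j < c <;> simp [hj] <;> omega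
    rw [this, Finset.card_sdiff_of_subset (by simp), Finset.card_range, Finset.card_range]
  · have : ((Finset.range n).filter (fun j => (if j < c then (1:ℕ) else 2) = v)) = ∅ := by
      ext j; simp only [Finset.mem_filter, Finset.mem_range, Finset.notMem_empty, iff_false]
      by_cases hj : j < c <;> simp [hj] <;> omega
    rw [this, Finset.card_empty]

lemma cardIfLe (c n v : ℕ) : ((Finset.range n).filter (fun j => (if j < c then (1:ℕ) else 2) ≤ v)).card
    = if v = 0 then 0 else if v = 1 then min c n else n := by
  split_ifs with h1 h2
  · subst h1
    have : ((Finset.range n).filter (fun j => (if j < c then (1:ℕ) else 2) ≤ 0)) = ∅ := by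
      ext j; simp only [Finset.mem_filter, Finset.mem_range, Finset.notMem_empty, iff_false]
      by_cases hj : j < c <;> simp [hj]
    rw [this, Finset.card_empty]
  · subst h2
    have : ((Finset.range n).filter (fun j => (if j < c then (1:ℕ) else 2) ≤ 1)) = Finset.range (min c n) := by
      ext j; simp only [Finset.mem_filter, Finset.mem_range, lt_min_iff]
      by_cases hj : j < c <;> simp [hj] <;> omega
    rw [this, Finset.card_range]
  · have : ((Finset.range n).filter (fun j => (if j < c then (1:ℕ) else 2) ≤ v)) = Finset.range n := by
      ext j; simp only [Finset.mem_filter, Finset.mem_range, and_iff_left_iff_imp]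
      intro _; by_cases hj : j < c <;> simp [hj] <;> omega
    rw [this, Finset.card_range]


lemma getD0 (a b : ℕ) : [a,b].getD 0 0 = a := rfl
lemma getD1 (a b : ℕ) : [a,b].getD 1 0 = b := rfl

lemma cellCount_two (a b v : ℕ) (f : ℕ → ℕ → ℕ) : cellCount [a,b] f v =
    ((Finset.range a).filter (fun j => f 0 j = v)).card
    + ((Finset.range b).filter (fun j => f 1 j = v)).card := by
  rw [cellCount]
  simp [Finset.sum_range_succ, getD0, getD1]

lemma cellCount_Fxy (a b x y v : ℕ) : cellCount [a,b] (Fxy x y) v =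
    (if v = 1 then min x a else if v = 2 then a - min x a else 0)
    + (if v = 1 then min y b else if v = 2 then b - min y b else 0) := by
  rw [cellCount_two]
  rw [show (Finset.range a).filter (fun j => Fxy x y 0 j = v)
      = (Finset.range a).filter (fun j => (if j < x then (1:ℕ) else 2) = v) from rfl]
  rw [show (Finset.range b).filter (fun j => Fxy x y 1 j = v)
      = (Finset.range b).filter (fun j => (if j < y then (1:ℕ) else 2) = v) from rfl]
  rw [cardIf, cardIf]

lemma partialCount_two0 (a b v : ℕ) (f : ℕ → ℕ → ℕ) : partialCount [a,b] f v 0 =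
    ((Finset.range a).filter (fun j => f 0 j ≤ v)).card := by
  rw [partialCount, getD0]

lemma partialCount_two1 (a b v : ℕ) (f : ℕ → ℕ → ℕ) : partialCount [a,b] f v 1 =
    ((Finset.range b).filter (fun j => f 1 j ≤ v)).card := by
  rw [partialCount, getD1]

lemma partialCount_Fxy0 (a b x y v : ℕ) : partialCount [a,b] (Fxy x y) v 0 =
    if v = 0 then 0 else if v = 1 then min x a else a := by
  rw [partialCount_two0]
  rw [show (Finset.range a).filter (fun j => Fxy x y 0 j ≤ v)
      = (Finset.range a).filter (fun j => (if j < x then (1:ℕ) else 2) ≤ v) from rfl]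
  rw [cardIfLe]

lemma partialCount_Fxy1 (a b x y v : ℕ) : partialCount [a,b] (Fxy x y) v 1 =
    if v = 0 then 0 else if v = 1 then min y b else b := by
  rw [partialCount_two1]
  rw [show (Finset.range b).filter (fun j => Fxy x y 1 j ≤ v)
      = (Finset.range b).filter (fun j => (if j < y then (1:ℕ) else 2) ≤ v) from rfl]
  rw [cardIfLe]

lemma mem_rowsOf_two (a b v i : ℕ) (f : ℕ → ℕ → ℕ) :
    i ∈ rowsOf [a,b] f v ↔ (i = 0 ∧ ∃ j < a, f 0 j = v) ∨ (i = 1 ∧ ∃ j < b, f 1 j = v) := by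
  rw [rowsOf]
  simp only [Finset.mem_filter, Finset.mem_range, List.length_cons, List.length_nil]
  constructor
  · rintro ⟨hi, j, hj, hfv⟩
    interval_cases i
    · exact Or.inl ⟨rfl, j, by rw [getD0] at hj; exact hj, hfv⟩
    · exact Or.inr ⟨rfl, j, by rw [getD1] at hj; exact hj, hfv⟩
  · rintro (⟨rfl, j, hj, hfv⟩ | ⟨rfl, j, hj, hfv⟩)
    · exact ⟨by omega, j, by rw [getD0]; exact hj, hfv⟩
    · exact ⟨by omega, j, by rw [getD1]; exact hj, hfv⟩

lemma Fxy0 (x y j : ℕ) : Fxy x y 0 j = if j < x then 1 else 2 := rfl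
lemma Fxy1 (x y j : ℕ) : Fxy x y 1 j = if j < y then 1 else 2 := rfl

lemma rowsOf_Fxy (a b x y v : ℕ) (hb : 0 < b) (hba : b < a) :
    rowsOf [a,b] (Fxy x y) v =
    ((if v = 1 ∧ 0 < x ∨ v = 2 ∧ x < a then {0} else ∅) ∪
     (if v = 1 ∧ 0 < y ∨ v = 2 ∧ y < b then {1} else ∅) : Finset ℕ) := by
  ext i
  rw [mem_rowsOf_two]
  simp only [Finset.mem_union]
  constructor
  · rintro (⟨rfl, j, hj, hfv⟩ | ⟨rfl, j, hj, hfv⟩)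
    · left
      rw [Fxy0] at hfv
      rw [if_pos]
      · exact Finset.mem_singleton_self 0
      · by_cases hjx : j < x
        · rw [if_pos hjx] at hfv; exact Or.inl ⟨hfv.symm, by omega⟩
        · rw [if_neg hjx] at hfv; exact Or.inr ⟨hfv.symm, by omega⟩
    · right
      rw [Fxy1] at hfv
      rw [if_pos]
      · exact Finset.mem_singleton_self 1
      · by_cases hjy : j < y
        · rw [if_pos hjy] at hfv; exact Or.inl ⟨hfv.symm, by omega⟩
        · rw [if_neg hjy] at hfv; exact Or.inr ⟨hfv.symm, by omega⟩
  · rintro (hmem | hmem)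
    · by_cases hc : v = 1 ∧ 0 < x ∨ v = 2 ∧ x < a
      · rw [if_pos hc] at hmem
        rw [Finset.mem_singleton] at hmem
        subst hmem
        left; refine ⟨rfl, ?_⟩
        rcases hc with ⟨rfl, hx⟩ | ⟨rfl, hx⟩
        · exact ⟨0, by omega, by rw [Fxy0, if_pos hx]⟩
        · exact ⟨x, by omega, by rw [Fxy0, if_neg (lt_irrefl x)]⟩
      · rw [if_neg hc] at hmem; exact absurd hmem (Finset.notMem_empty _)
    · by_cases hc : v = 1 ∧ 0 < y ∨ v = 2 ∧ y < b
      · rw [if_pos hc] at hmem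
        rw [Finset.mem_singleton] at hmem
        subst hmem
        right; refine ⟨rfl, ?_⟩
        rcases hc with ⟨rfl, hy⟩ | ⟨rfl, hy⟩
        · exact ⟨0, by omega, by rw [Fxy1, if_pos hy]⟩
        · exact ⟨y, by omega, by rw [Fxy1, if_neg (lt_irrefl y)]⟩
      · rw [if_neg hc] at hmem; exact absurd hmem (Finset.notMem_empty _)

lemma isBarTableau_Fxy (a b x y : ℕ) (hb : 0 < b) (hba : b < a) (hx : x ≤ a) (hy : y ≤ b)
    (hodd1 : x + y = 0 ∨ Odd (x + y))
    (hodd2 : (a - x) + (b - y) = 0 ∨ Odd ((a - x) + (b - y)))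
    (hone : x = a ∨ y = b) (hne : x ≠ 0 → y ≠ 0 → x ≠ y) :
    IsBarTableau [a,b] (Fxy x y) := by
  refine ⟨?_, ?_, ?_, ?_, ?_⟩
  · intro i j _ _
    rcases Nat.eq_zero_or_pos i with rfl | hi
    · rw [Fxy0]; split_ifs <;> omega
    · have : Fxy x y i j = if j < y then 1 else 2 := by
        rw [Fxy]; rw [if_neg (by omega)]
      rw [this]; split_ifs <;> omega
  · intro i j j' _ hjj' _
    rcases Nat.eq_zero_or_pos i with rfl | hi
    · rw [Fxy0, Fxy0]; split_ifs <;> omega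
    · have h1 : Fxy x y i j = if j < y then 1 else 2 := by rw [Fxy]; rw [if_neg (by omega)]
      have h2 : Fxy x y i j' = if j' < y then 1 else 2 := by rw [Fxy]; rw [if_neg (by omega)]
      rw [h1, h2]; split_ifs <;> omega
  · intro v hv
    rw [cellCount_Fxy]
    rcases Nat.lt_or_ge v 3 with hv3 | hv3
    · interval_cases v
      · simp only [if_pos rfl]
        rw [min_eq_left hx, min_eq_left hy]
        exact hodd1
      · simp only [if_neg (by omega : ¬ (2:ℕ) = 1), if_pos rfl]
        rw [min_eq_left hx, min_eq_left hy]
        exact hodd2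
    · rw [if_neg (by omega), if_neg (by omega), if_neg (by omega), if_neg (by omega)]
      exact Or.inl rfl
  · intro v hv
    rw [rowsOf_Fxy a b x y v hb hba]
    constructor
    · split_ifs <;> simp
    · intro hcard i hi
      have h01 : (if v = 1 ∧ 0 < x ∨ v = 2 ∧ x < a then ({0}:Finset ℕ) else ∅).card ≤ 1 := by
        split_ifs <;> simp
      have h11 : (if v = 1 ∧ 0 < y ∨ v = 2 ∧ y < b then ({1}:Finset ℕ) else ∅).card ≤ 1 := by
        split_ifs <;> simp
      have hcard2 := Finset.card_union_le
        (if v = 1 ∧ 0 < x ∨ v = 2 ∧ x < a then ({0}:Finset ℕ) else ∅)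
        (if v = 1 ∧ 0 < y ∨ v = 2 ∧ y < b then ({1}:Finset ℕ) else ∅)
      rw [hcard] at hcard2
      -- both parts must be nonempty singletons
      by_cases hc0 : v = 1 ∧ 0 < x ∨ v = 2 ∧ x < a
      · by_cases hc1 : v = 1 ∧ 0 < y ∨ v = 2 ∧ y < b
        · -- if v = 2 both would contradict hone
          rcases hc0 with ⟨rfl, hx0⟩ | ⟨rfl, hxa⟩
          · rcases hc1 with ⟨_, hy0⟩ | ⟨h2, _⟩
            · rw [if_pos (Or.inl ⟨rfl, hx0⟩), if_pos (Or.inl ⟨rfl, hy0⟩)] at hi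
              simp only [Finset.mem_union, Finset.mem_singleton] at hi
              rcases hi with rfl | rfl
              · rw [Fxy0, if_pos hx0]
              · rw [Fxy1, if_pos hy0]
            · omega
          · rcases hc1 with ⟨h2, _⟩ | ⟨_, hyb⟩
            · omega
            · omega
        · rw [if_neg hc1] at hcard hi
          rw [if_pos hc0] at hcard
          simp at hcard
      · rw [if_neg hc0] at hcard hi
        by_cases hc1 : v = 1 ∧ 0 < y ∨ v = 2 ∧ y < b
        · rw [if_pos hc1] at hcard; simp at hcard
        · rw [if_neg hc1] at hcard; simp at hcard
  · intro v i i' hv hii' hi' hp hp'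
    have hlen : ([a,b]:List ℕ).length = 2 := rfl
    rw [hlen] at hi'
    have hi0 : i = 0 := by omega
    have hi1 : i' = 1 := by omega
    subst hi0; subst hi1
    rw [partialCount_Fxy0] at hp ⊢
    rw [partialCount_Fxy1] at hp' ⊢
    rcases Nat.lt_or_ge v 2 with hv2 | hv2
    · interval_cases v
      rw [if_neg (by omega), if_pos rfl] at hp hp' ⊢
      rw [min_eq_left hx] at hp ⊢
      rw [min_eq_left hy] at hp' ⊢
      exact hne hp hp'
    · split_ifs <;> omega

lemma downward_char (n : ℕ) (h : ℕ → ℕ) (hmono : ∀ j j', j ≤ j' → j' < n → h j ≤ h j')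
    (j : ℕ) (hj : j < n) :
    (h j ≤ 1 ↔ j < ((Finset.range n).filter (fun k => h k ≤ 1)).card) := by
  set S := (Finset.range n).filter (fun k => h k ≤ 1) with hS
  constructor
  · intro hj1
    have hsub : Finset.range (j+1) ⊆ S := by
      intro k hk
      rw [Finset.mem_range] at hk
      rw [hS, Finset.mem_filter, Finset.mem_range]
      exact ⟨by omega, le_trans (hmono k j (by omega) hj) hj1⟩
    calc j < j+1 := by omega
    _ = (Finset.range (j+1)).card := (Finset.card_range _).symm
    _ ≤ S.card := Finset.card_le_card hsub
  · intro hcard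
    by_contra hj1
    have hsub : S ⊆ Finset.range j := by
      intro k hk
      rw [hS, Finset.mem_filter, Finset.mem_range] at hk
      rw [Finset.mem_range]
      by_contra hkj
      exact hj1 (le_trans (hmono j k (by omega) hk.1) hk.2)
    have := Finset.card_le_card hsub
    rw [Finset.card_range] at this
    omega

lemma classify (a b s1 s2 : ℕ) (hab : b < a) (hb : 0 < b) (hsum : s1 + s2 = a + b)
    (ho1 : Odd s1) (ho2 : Odd s2) (hlt : s2 < b)
    (g : ℕ → ℕ → ℕ) (hg : IsBarTableau [a,b] g) (ht : HasType2 [a,b] g s1 s2) :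
    EqOnShape [a,b] g (Fxy a (b - s2)) ∨ EqOnShape [a,b] g (Fxy (a - s2) b) := by
  obtain ⟨hpos, hmono, _hodd, hrows, _hdist⟩ := hg
  obtain ⟨ht1, ht2, ht3⟩ := ht
  have hlen : ([a,b] : List ℕ).length = 2 := rfl
  have hle2 : ∀ i j, i < 2 → j < List.getD [a,b] i 0 → g i j ≤ 2 := by
    intro i j hi hj
    by_contra hgt
    have h3 : cellCount [a,b] g (g i j) = 0 := ht3 _ (by omega)
    rw [cellCount_two] at h3
    interval_cases i
    · rw [getD0] at hj
      have hmem : j ∈ (Finset.range a).filter (fun k => g 0 k = g 0 j) := by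
        exact Finset.mem_filter.mpr ⟨Finset.mem_range.mpr hj, rfl⟩
      have := Finset.card_pos.mpr ⟨j, hmem⟩
      omega
    · rw [getD1] at hj
      have hmem : j ∈ (Finset.range b).filter (fun k => g 1 k = g 1 j) := by
        exact Finset.mem_filter.mpr ⟨Finset.mem_range.mpr hj, rfl⟩
      have := Finset.card_pos.mpr ⟨j, hmem⟩
      omega
  set x := partialCount [a,b] g 1 0 with hxdef
  set y := partialCount [a,b] g 1 1 with hydef
  have hchar0 : ∀ j, j < a → (g 0 j = 1 ↔ j < x) := by
    intro j hj
    have hdc := downward_char a (g 0)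
      (fun j j' hjj hj' => hmono 0 j j' (by rw [hlen]; omega) hjj (by rw [getD0]; exact hj')) j hj
    rw [hxdef, partialCount_two0]
    have hp := hpos 0 j (by rw [hlen]; omega) (by rw [getD0]; exact hj)
    constructor
    · intro h1; exact hdc.mp (le_of_eq h1)
    · intro hlt'; have := hdc.mpr hlt'; omega
  have hchar1 : ∀ j, j < b → (g 1 j = 1 ↔ j < y) := by
    intro j hj
    have hdc := downward_char b (g 1)
      (fun j j' hjj hj' => hmono 1 j j' (by rw [hlen]; omega) hjj (by rw [getD1]; exact hj')) j hj
    rw [hydef, partialCount_two1]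
    have hp := hpos 1 j (by rw [hlen]; omega) (by rw [getD1]; exact hj)
    constructor
    · intro h1; exact hdc.mp (le_of_eq h1)
    · intro hlt'; have := hdc.mpr hlt'; omega
  have hx_le : x ≤ a := by
    rw [hxdef, partialCount_two0]
    calc ((Finset.range a).filter _).card ≤ (Finset.range a).card := Finset.card_filter_le _ _
    _ = a := Finset.card_range a
  have hy_le : y ≤ b := by
    rw [hydef, partialCount_two1]
    calc ((Finset.range b).filter _).card ≤ (Finset.range b).card := Finset.card_filter_le _ _
    _ = b := Finset.card_range b
  have hf0 : (Finset.range a).filter (fun k => g 0 k = 1) = Finset.range x := by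
    ext k; simp only [Finset.mem_filter, Finset.mem_range]
    constructor
    · rintro ⟨hk, h1⟩; exact (hchar0 k hk).mp h1
    · intro hk; exact ⟨by omega, (hchar0 k (by omega)).mpr hk⟩
  have hf1 : (Finset.range b).filter (fun k => g 1 k = 1) = Finset.range y := by
    ext k; simp only [Finset.mem_filter, Finset.mem_range]
    constructor
    · rintro ⟨hk, h1⟩; exact (hchar1 k hk).mp h1
    · intro hk; exact ⟨by omega, (hchar1 k (by omega)).mpr hk⟩
  rw [cellCount_two, hf0, hf1, Finset.card_range, Finset.card_range] at ht1
  have hg0 : (Finset.range a).filter (fun k => g 0 k = 2) = Finset.range a \ Finset.range x := by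
    ext k; simp only [Finset.mem_filter, Finset.mem_range, Finset.mem_sdiff]
    constructor
    · rintro ⟨hk, h2⟩
      refine ⟨hk, fun hkx => ?_⟩
      have := (hchar0 k hk).mpr hkx; omega
    · rintro ⟨hk, hkx⟩
      have h1 := hchar0 k hk
      have := hle2 0 k (by omega) (by rw [getD0]; exact hk)
      have := hpos 0 k (by rw [hlen]; omega) (by rw [getD0]; exact hk)
      exact ⟨hk, by omega⟩
  have hg1 : (Finset.range b).filter (fun k => g 1 k = 2) = Finset.range b \ Finset.range y := by
    ext k; simp only [Finset.mem_filter, Finset.mem_range, Finset.mem_sdiff]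
    constructor
    · rintro ⟨hk, h2⟩
      refine ⟨hk, fun hky => ?_⟩
      have := (hchar1 k hk).mpr hky; omega
    · rintro ⟨hk, hky⟩
      have h1 := hchar1 k hk
      have := hle2 1 k (by omega) (by rw [getD1]; exact hk)
      have := hpos 1 k (by rw [hlen]; omega) (by rw [getD1]; exact hk)
      exact ⟨hk, by omega⟩
  rw [cellCount_two, hg0, hg1,
    Finset.card_sdiff_of_subset (Finset.range_subset_range.mpr hx_le),
    Finset.card_sdiff_of_subset (Finset.range_subset_range.mpr hy_le),
    Finset.card_range, Finset.card_range, Finset.card_range, Finset.card_range] at ht2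
  have hxy : x = a ∨ y = b := by
    by_contra hcon
    push_neg at hcon
    obtain ⟨hxa, hyb⟩ := hcon
    have hxa' : x < a := lt_of_le_of_ne hx_le hxa
    have hyb' : y < b := lt_of_le_of_ne hy_le hyb
    have hg0x : g 0 x = 2 := by
      have h1 := hchar0 x hxa'
      have := hle2 0 x (by omega) (by rw [getD0]; exact hxa')
      have := hpos 0 x (by rw [hlen]; omega) (by rw [getD0]; exact hxa')
      omega
    have hg1y : g 1 y = 2 := by
      have h1 := hchar1 y hyb'
      have := hle2 1 y (by omega) (by rw [getD1]; exact hyb')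
      have := hpos 1 y (by rw [hlen]; omega) (by rw [getD1]; exact hyb')
      omega
    have h0mem : 0 ∈ rowsOf [a,b] g 2 := by
      rw [mem_rowsOf_two]; exact Or.inl ⟨rfl, x, hxa', hg0x⟩
    have h1mem : 1 ∈ rowsOf [a,b] g 2 := by
      rw [mem_rowsOf_two]; exact Or.inr ⟨rfl, y, hyb', hg1y⟩
    have hsub : ({0,1} : Finset ℕ) ⊆ rowsOf [a,b] g 2 := by
      intro k hk
      simp only [Finset.mem_insert, Finset.mem_singleton] at hk
      rcases hk with rfl | rfl
      · exact h0mem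
      · exact h1mem
    have hcard2 : (rowsOf [a,b] g 2).card = 2 := by
      have h2le := (hrows 2 (by omega)).1
      have := Finset.card_le_card hsub
      have : ({0,1} : Finset ℕ).card = 2 := by decide
      omega
    have hstart := (hrows 2 (by omega)).2 hcard2
    have hs0 := hstart 0 h0mem
    have hs1 := hstart 1 h1mem
    have hx0 : x = 0 := by
      by_contra hx0
      have := (hchar0 0 (by omega)).mpr (by omega)
      omega
    have hy0 : y = 0 := by
      by_contra hy0
      have := (hchar1 0 hb).mpr (by omega)
      omega
    rw [Nat.odd_iff] at ho1
    omega
  rcases hxy with hxa | hyb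
  · left
    have hyval : y = b - s2 := by omega
    intro i j hi hj
    rw [hlen] at hi
    interval_cases i
    · rw [getD0] at hj
      rw [(hchar0 j hj).mpr (by omega), Fxy0, if_pos hj]
    · rw [getD1] at hj
      rw [Fxy1]
      by_cases hjy : j < b - s2
      · rw [if_pos hjy, (hchar1 j hj).mpr (by omega)]
      · rw [if_neg hjy]
        have h1 := hchar1 j hj
        have := hle2 1 j (by omega) (by rw [getD1]; exact hj)
        have := hpos 1 j (by rw [hlen]; omega) (by rw [getD1]; exact hj)
        omega
  · right
    have hxval : x = a - s2 := by
      rw [Nat.odd_iff] at ho1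
      omega
    intro i j hi hj
    rw [hlen] at hi
    interval_cases i
    · rw [getD0] at hj
      rw [Fxy0]
      by_cases hjx : j < a - s2
      · rw [if_pos hjx, (hchar0 j hj).mpr (by omega)]
      · rw [if_neg hjx]
        have h1 := hchar0 j hj
        have := hle2 0 j (by omega) (by rw [getD0]; exact hj)
        have := hpos 0 j (by rw [hlen]; omega) (by rw [getD0]; exact hj)
        omega
    · rw [getD1] at hj
      rw [(hchar1 j hj).mpr (by omega), Fxy1, if_pos (by omega)]

lemma msMax_coe (l : List ℕ) : msMax ↑l = l.foldr max 0 := by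
  rw [msMax, ← Multiset.coe_fold_r, Multiset.coe_toList, Multiset.coe_fold_r]

lemma indexOf_pair_fst (u v : ℕ) : [u,v].idxOf u = 0 := by
  simp [List.idxOf_cons]

lemma indexOf_pair_snd (u v : ℕ) (h : u ≠ v) : [u,v].idxOf v = 1 := by
  simp only [List.idxOf_cons, Bool.cond_eq_ite, beq_iff_eq, beq_self_eq_true]
  split_ifs <;> simp_all

lemma epsP_pair_eq (a b : ℕ) (h : a % 2 = b % 2) : epsP [a,b] = 0 := by
  rw [epsP]
  simp only [List.countP_cons, List.countP_nil, decide_eq_true_eq]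
  split_ifs <;> omega

lemma epsP_pair_ne (a b : ℕ) (h : a % 2 ≠ b % 2) : epsP [a,b] = 1 := by
  rw [epsP]
  simp only [List.countP_cons, List.countP_nil, decide_eq_true_eq]
  split_ifs <;> omega

lemma pair_sub_nil (p q : ℕ) : (↑[p,q] : Multiset ℕ) - ↑([] : List ℕ) = ↑[p,q] := by
  rw [show (↑([] : List ℕ) : Multiset ℕ) = 0 from rfl, tsub_zero]

lemma singleton_coe_ne_zero (c : ℕ) : (↑[c] : Multiset ℕ) ≠ 0 := by simp

lemma barFactor_pair_nil (p q : ℕ) (hq : 0 < q) (hqp : q < p) :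
    barFactor [p,q] [] = (-1:ℤ)^(1+p) * 2^(1 - epsP [p,q]) := by
  rw [barFactor]
  simp only [show (↑([] : List ℕ) : Multiset ℕ) = 0 from rfl, zero_tsub, tsub_zero, if_true]
  have hcard : Multiset.card (↑[p,q] : Multiset ℕ) = 2 := rfl
  rw [hcard, if_neg (by omega)]
  have hsum : (↑[p,q] : Multiset ℕ).sum = p + q := by simp
  have hmax : msMax (↑[p,q] : Multiset ℕ) = p := by
    rw [msMax_coe]
    simp only [List.foldr]
    omega
  rw [hsum, hmax]
  have h1 : p + q - p = q := by omega
  rw [h1]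
  have h2 : [p,q].idxOf q = 1 := indexOf_pair_snd p q (by omega)
  have h3 : [p,q].idxOf p = 0 := indexOf_pair_fst p q
  rw [h2, h3]

lemma pair_sub_left (a b c : ℕ) (hcb : c ≠ b) (hca : c ≠ a) :
    (↑[a,b] : Multiset ℕ) - ↑[a,c] = ↑[b] := by
  ext k
  simp only [Multiset.count_sub, Multiset.coe_count]
  simp only [List.count_cons, List.count_nil, beq_iff_eq]
  split_ifs <;> omega

lemma pair_sub_right (a b c : ℕ) (hcb : c ≠ b) (hca : c ≠ a) :
    (↑[a,c] : Multiset ℕ) - ↑[a,b] = ↑[c] := by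
  ext k
  simp only [Multiset.count_sub, Multiset.coe_count]
  simp only [List.count_cons, List.count_nil, beq_iff_eq]
  split_ifs <;> omega

lemma barFactor_row1 (a b c : ℕ) (hcb : c < b) (hba : b < a) (hpar : a % 2 = b % 2) :
    barFactor [a,b] [a,c] = 2 := by
  rw [barFactor]
  simp only [pair_sub_left a b c (by omega) (by omega), pair_sub_right a b c (by omega) (by omega)]
  rw [if_neg (singleton_coe_ne_zero c)]
  have h1 : (↑[c] : Multiset ℕ).sum = c := by simp
  have h2 : (↑[b] : Multiset ℕ).sum = b := by simp
  rw [h1, h2]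
  have h3 : [a,c].idxOf c = 1 := indexOf_pair_snd a c (by omega)
  have h4 : [a,b].idxOf b = 1 := indexOf_pair_snd a b (by omega)
  rw [h3, h4, epsP_pair_eq a b hpar]
  norm_num

lemma pair_sub_a1 (a b e : ℕ) (hea : e ≠ a) : (↑[a,b] : Multiset ℕ) - ↑[e,b] = ↑[a] := by
  ext k
  simp only [Multiset.count_sub, Multiset.coe_count]
  simp only [List.count_cons, List.count_nil, beq_iff_eq]
  split_ifs <;> omega

lemma pair_sub_a2 (a b e : ℕ) (hea : e ≠ a) : (↑[e,b] : Multiset ℕ) - ↑[a,b] = ↑[e] := by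
  ext k
  simp only [Multiset.count_sub, Multiset.coe_count]
  simp only [List.count_cons, List.count_nil, beq_iff_eq]
  split_ifs <;> omega

lemma pair_sub_a3 (a b e : ℕ) (hea : e ≠ a) : (↑[a,b] : Multiset ℕ) - ↑[b,e] = ↑[a] := by
  ext k
  simp only [Multiset.count_sub, Multiset.coe_count]
  simp only [List.count_cons, List.count_nil, beq_iff_eq]
  split_ifs <;> omega

lemma pair_sub_a4 (a b e : ℕ) (hea : e ≠ a) : (↑[b,e] : Multiset ℕ) - ↑[a,b] = ↑[e] := by
  ext k
  simp only [Multiset.count_sub, Multiset.coe_count]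
  simp only [List.count_cons, List.count_nil, beq_iff_eq]
  split_ifs <;> omega

-- f2 case e > b : nu = [e, b]
lemma barFactor_row0_gt (a b e : ℕ) (hea : e ≠ a) (hba : b < a) (hpar : a % 2 = b % 2) :
    barFactor [a,b] [e,b] = 2 := by
  rw [barFactor]
  simp only [pair_sub_a1 a b e hea, pair_sub_a2 a b e hea]
  rw [if_neg (singleton_coe_ne_zero e)]
  have h1 : (↑[e] : Multiset ℕ).sum = e := by simp
  have h2 : (↑[a] : Multiset ℕ).sum = a := by simp
  rw [h1, h2]
  have h3 : [e,b].idxOf e = 0 := indexOf_pair_fst e b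
  have h4 : [a,b].idxOf a = 0 := indexOf_pair_fst a b
  rw [h3, h4, epsP_pair_eq a b hpar]
  norm_num

-- f2 case e < b : nu = [b, e]
lemma barFactor_row0_lt (a b e : ℕ) (hea : e ≠ a) (heb : e ≠ b) (hba : b < a)
    (hpar : a % 2 = b % 2) :
    barFactor [a,b] [b,e] = -2 := by
  rw [barFactor]
  simp only [pair_sub_a3 a b e hea, pair_sub_a4 a b e hea]
  rw [if_neg (singleton_coe_ne_zero e)]
  have h1 : (↑[e] : Multiset ℕ).sum = e := by simp
  have h2 : (↑[a] : Multiset ℕ).sum = a := by simp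
  rw [h1, h2]
  have h3 : [b,e].idxOf e = 1 := indexOf_pair_snd b e (Ne.symm heb)
  have h4 : [a,b].idxOf a = 0 := indexOf_pair_fst a b
  rw [h3, h4, epsP_pair_eq a b hpar]
  norm_num

lemma valueSet_Fxy (a b x y : ℕ) (hb : 0 < b) (hba : b < a) (hx : 0 < x) (h2 : x < a ∨ y < b) :
    valueSet [a,b] (Fxy x y) = {1,2} := by
  have hlen : ([a,b] : List ℕ).length = 2 := rfl
  ext v
  rw [valueSet]
  constructor
  · intro hv
    rw [Finset.mem_biUnion] at hv
    obtain ⟨i, hi, hvi⟩ := hv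
    rw [Finset.mem_image] at hvi
    obtain ⟨j, _, hfv⟩ := hvi
    have hor : Fxy x y i j = 1 ∨ Fxy x y i j = 2 := by
      rcases Nat.eq_zero_or_pos i with rfl | hi0
      · rw [Fxy0]; split_ifs <;> simp
      · have heq : Fxy x y i j = if j < y then 1 else 2 := by
          rw [Fxy]; rw [if_neg (by omega)]
        rw [heq]; split_ifs <;> simp
    rw [← hfv]
    simp only [Finset.mem_insert, Finset.mem_singleton]
    exact hor
  · intro hv
    simp only [Finset.mem_insert, Finset.mem_singleton] at hv
    rw [Finset.mem_biUnion]
    rcases hv with rfl | rfl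
    · refine ⟨0, by rw [Finset.mem_range, hlen]; omega, Finset.mem_image.mpr ⟨0, ?_, ?_⟩⟩
      · rw [Finset.mem_range, getD0]; omega
      · rw [Fxy0, if_pos hx]
    · rcases h2 with hxa | hyb
      · refine ⟨0, by rw [Finset.mem_range, hlen]; omega, Finset.mem_image.mpr ⟨x, ?_, ?_⟩⟩
        · rw [Finset.mem_range, getD0]; omega
        · rw [Fxy0, if_neg (lt_irrefl x)]
      · refine ⟨1, by rw [Finset.mem_range, hlen]; omega, Finset.mem_image.mpr ⟨y, ?_, ?_⟩⟩
        · rw [Finset.mem_range, getD1]; omega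
        · rw [Fxy1, if_neg (lt_irrefl y)]

lemma sort_12 : ({1,2} : Finset ℕ).sort (· ≤ ·) = [1,2] := by
  have h : ({1,2} : Finset ℕ).val = (↑[1,2] : Multiset ℕ) := rfl
  rw [Finset.sort, h, sort_coe]
  simp

lemma subShape_map (a b v : ℕ) (f : ℕ → ℕ → ℕ) :
    (List.range ([a,b] : List ℕ).length).map (fun i => partialCount [a,b] f v i)
      = [partialCount [a,b] f v 0, partialCount [a,b] f v 1] := by
  rfl

lemma subShape_zero (a b v : ℕ) (f : ℕ → ℕ → ℕ)
    (h0 : partialCount [a,b] f v 0 = 0) (h1 : partialCount [a,b] f v 1 = 0) :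
    subShape [a,b] f v = [] := by
  rw [subShape, subShape_map, h0, h1]
  have hfil : ([0,0] : List ℕ).filter (fun c => decide (0 < c)) = [] := by decide
  rw [hfil]
  rw [show (↑([] : List ℕ) : Multiset ℕ) = 0 from rfl, Multiset.sort_zero]
  rfl

lemma subShape_desc (a b v p q : ℕ) (f : ℕ → ℕ → ℕ)
    (h0 : partialCount [a,b] f v 0 = p) (h1 : partialCount [a,b] f v 1 = q)
    (hq : 0 < q) (hqp : q ≤ p) :
    subShape [a,b] f v = [p,q] := by
  rw [subShape, subShape_map, h0, h1]
  have hfil : ([p,q] : List ℕ).filter (fun c => decide (0 < c)) = [p,q] := by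
    rw [List.filter_cons_of_pos (by simpa using (by omega : 0 < p)),
        List.filter_cons_of_pos (by simpa using hq), List.filter_nil]
  rw [hfil]
  have hperm : (↑[p,q] : Multiset ℕ) = ↑[q,p] := by
    rw [Multiset.coe_eq_coe]; exact List.Perm.swap q p []
  rw [hperm, sort_coe [q,p] (by simp [hqp])]
  rfl

lemma subShape_asc (a b v p q : ℕ) (f : ℕ → ℕ → ℕ)
    (h0 : partialCount [a,b] f v 0 = p) (h1 : partialCount [a,b] f v 1 = q)
    (hp : 0 < p) (hpq : p ≤ q) :
    subShape [a,b] f v = [q,p] := by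
  rw [subShape, subShape_map, h0, h1]
  have hfil : ([p,q] : List ℕ).filter (fun c => decide (0 < c)) = [p,q] := by
    rw [List.filter_cons_of_pos (by simpa using hp),
        List.filter_cons_of_pos (by simpa using (by omega : 0 < q)), List.filter_nil]
  rw [hfil]
  rw [sort_coe [p,q] (by simp [hpq])]
  rfl

lemma weight_eq (a b : ℕ) (f : ℕ → ℕ → ℕ) (hvs : valueSet [a,b] f = {1,2}) :
    weight [a,b] f = barFactor (subShape [a,b] f 1) (subShape [a,b] f 0) *
      (barFactor (subShape [a,b] f 2) (subShape [a,b] f 1) * 1) := by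
  rw [weight, hvs, sort_12]
  norm_num [List.foldr, List.range_succ]

lemma negpow_congr (m n : ℕ) (h : m % 2 = n % 2) : (-1:ℤ)^m = (-1)^n := by
  rcases Nat.even_or_odd m with hm | hm
  · rw [hm.neg_one_pow, (Nat.even_iff.mpr (by rw [Nat.even_iff] at hm; omega) : Even n).neg_one_pow]
  · rw [hm.neg_one_pow, (Nat.odd_iff.mpr (by rw [Nat.odd_iff] at hm; omega) : Odd n).neg_one_pow]

lemma partial_zero0 (a b x y : ℕ) : partialCount [a,b] (Fxy x y) 0 0 = 0 := by
  rw [partialCount_Fxy0]; simp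

lemma partial_zero1 (a b x y : ℕ) : partialCount [a,b] (Fxy x y) 0 1 = 0 := by
  rw [partialCount_Fxy1]; simp

lemma pc0_one (a b x y : ℕ) (hx : x ≤ a) : partialCount [a,b] (Fxy x y) 1 0 = x := by
  rw [partialCount_Fxy0]; norm_num [min_eq_left hx]

lemma pc1_one (a b x y : ℕ) (hy : y ≤ b) : partialCount [a,b] (Fxy x y) 1 1 = y := by
  rw [partialCount_Fxy1]; norm_num [min_eq_left hy]

lemma pc0_two (a b x y : ℕ) : partialCount [a,b] (Fxy x y) 2 0 = a := by
  rw [partialCount_Fxy0]; norm_num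

lemma pc1_two (a b x y : ℕ) : partialCount [a,b] (Fxy x y) 2 1 = b := by
  rw [partialCount_Fxy1]; norm_num

lemma weight_f1 (a b s2 : ℕ) (hb : 0 < b) (hba : b < a) (hs2 : 0 < s2) (hlt : s2 < b)
    (hpar : a % 2 = b % 2) (ho2 : s2 % 2 = 1) :
    weight [a,b] (Fxy a (b - s2)) = (-1:ℤ)^(1+a) * 2 := by
  have hc : 0 < b - s2 := by omega
  have hcb : b - s2 < b := by omega
  rw [weight_eq a b _ (valueSet_Fxy a b a (b - s2) hb hba (by omega) (Or.inr hcb))]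
  rw [subShape_zero a b 0 _ (partial_zero0 a b a (b-s2)) (partial_zero1 a b a (b-s2))]
  rw [subShape_desc a b 1 a (b - s2) _
      (pc0_one a b a (b - s2) (le_refl a))
      (pc1_one a b a (b - s2) (by omega)) hc (by omega)]
  rw [subShape_desc a b 2 a b _ (pc0_two a b a (b - s2)) (pc1_two a b a (b - s2)) hb (by omega)]
  rw [barFactor_pair_nil a (b - s2) hc (by omega)]
  rw [barFactor_row1 a b (b - s2) hcb hba hpar]
  rw [epsP_pair_ne a (b - s2) (by omega)]
  norm_num

lemma weight_f2 (a b s2 : ℕ) (hb : 0 < b) (hba : b < a) (hs2 : 0 < s2) (hlt : s2 < b)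
    (hpar : a % 2 = b % 2) (ho2 : s2 % 2 = 1) (hne : a - s2 ≠ b) :
    weight [a,b] (Fxy (a - s2) b) = (-1:ℤ)^a * 2 := by
  have he : 0 < a - s2 := by omega
  have hea : a - s2 < a := by omega
  rw [weight_eq a b _ (valueSet_Fxy a b (a - s2) b hb hba he (Or.inl hea))]
  rw [subShape_zero a b 0 _ (partial_zero0 a b (a-s2) b) (partial_zero1 a b (a-s2) b)]
  rw [subShape_desc a b 2 a b _ (pc0_two a b (a - s2) b) (pc1_two a b (a - s2) b) hb (by omega)]
  rcases lt_or_gt_of_ne hne with hlt2 | hgt2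
  · rw [subShape_asc a b 1 (a - s2) b _
        (pc0_one a b (a - s2) b (by omega))
        (pc1_one a b (a - s2) b (le_refl b)) he (by omega)]
    rw [barFactor_pair_nil b (a - s2) he hlt2]
    rw [barFactor_row0_lt a b (a - s2) (by omega) hne hba hpar]
    rw [epsP_pair_ne b (a - s2) (by omega)]
    rw [negpow_congr (1 + b) (1 + a) (by omega)]
    norm_num [pow_add]
  · rw [subShape_desc a b 1 (a - s2) b _
        (pc0_one a b (a - s2) b (by omega))
        (pc1_one a b (a - s2) b (le_refl b)) hb (by omega)]
    rw [barFactor_pair_nil (a - s2) b hb hgt2]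
    rw [barFactor_row0_gt a b (a - s2) (by omega) hba hpar]
    rw [epsP_pair_ne (a - s2) b (by omega)]
    rw [negpow_congr (1 + (a - s2)) a (by omega)]
    norm_num

end Helpers

/-- For a strict partition `λ = (a, b)` whose two parts have the same parity and
a partition `σ = (s₁, s₂)` of `|λ|` into two odd parts with `s₂ < b`, there are
exactly two bar tableaux of shape `λ` and type `σ`, and their weights cancel. -/
theorem two_bar_tableaux_cancel (a b s1 s2 : ℕ) (hab : b < a) (hb : 0 < b)
    (hpar : a % 2 = b % 2) (hsum : s1 + s2 = a + b) (hord : s2 ≤ s1)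
    (ho1 : Odd s1) (ho2 : Odd s2) (hlt : s2 < b) :
    ∃ f1 f2 : ℕ → ℕ → ℕ,
      IsBarTableau [a, b] f1 ∧ HasType2 [a, b] f1 s1 s2 ∧
      IsBarTableau [a, b] f2 ∧ HasType2 [a, b] f2 s1 s2 ∧
      ¬ EqOnShape [a, b] f1 f2 ∧
      (∀ g, IsBarTableau [a, b] g → HasType2 [a, b] g s1 s2 →
        EqOnShape [a, b] g f1 ∨ EqOnShape [a, b] g f2) ∧
      weight [a, b] f1 + weight [a, b] f2 = 0 := by
  have ho1' : s1 % 2 = 1 := Nat.odd_iff.mp ho1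
  have ho2' : s2 % 2 = 1 := Nat.odd_iff.mp ho2
  have hs2 : 0 < s2 := by omega
  have hne : a - s2 ≠ b := by omega
  have hbs2 : b - s2 ≤ b := by omega
  have h21 : ¬ (2:ℕ) = 1 := by omega
  refine ⟨Fxy a (b - s2), Fxy (a - s2) b, ?_, ?_, ?_, ?_, ?_, ?_, ?_⟩
  · exact isBarTableau_Fxy a b a (b - s2) hb hab (le_refl a) (by omega)
      (Or.inr (by rw [Nat.odd_iff]; omega)) (Or.inr (by rw [Nat.odd_iff]; omega))
      (Or.inl rfl) (fun _ _ => by omega)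
  · refine ⟨?_, ?_, ?_⟩
    · rw [cellCount_Fxy, if_pos rfl, if_pos rfl, min_self, min_eq_left hbs2]; omega
    · rw [cellCount_Fxy, if_neg h21, if_pos rfl, if_neg h21, if_pos rfl, min_self,
        min_eq_left hbs2]
      omega
    · intro v hv
      have h1 : ¬ v = 1 := by omega
      have h2 : ¬ v = 2 := by omega
      rw [cellCount_Fxy, if_neg h1, if_neg h2, if_neg h1, if_neg h2]
  · exact isBarTableau_Fxy a b (a - s2) b hb hab (by omega) (le_refl b)
      (Or.inr (by rw [Nat.odd_iff]; omega)) (Or.inr (by rw [Nat.odd_iff]; omega))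
      (Or.inr rfl) (fun _ _ => hne)
  · refine ⟨?_, ?_, ?_⟩
    · rw [cellCount_Fxy, if_pos rfl, if_pos rfl, min_self, min_eq_left (show a - s2 ≤ a from by omega)]
      omega
    · rw [cellCount_Fxy, if_neg h21, if_pos rfl, if_neg h21, if_pos rfl, min_self,
        min_eq_left (show a - s2 ≤ a from by omega)]
      omega
    · intro v hv
      have h1 : ¬ v = 1 := by omega
      have h2 : ¬ v = 2 := by omega
      rw [cellCount_Fxy, if_neg h1, if_neg h2, if_neg h1, if_neg h2]
  · intro h
    have heq := h 0 (a-1) (by simp) (by rw [getD0]; omega)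
    rw [Fxy0, Fxy0, if_pos (by omega : a - 1 < a), if_neg (by omega : ¬ a - 1 < a - s2)] at heq
    exact absurd heq (by omega)
  · exact fun g hg ht => classify a b s1 s2 hab hb hsum ho1 ho2 hlt g hg ht
  · rw [weight_f1 a b s2 hb hab hs2 hlt hpar ho2',
      weight_f2 a b s2 hb hab hs2 hlt hpar ho2' hne]
    have hpp : (-1:ℤ)^(1+a) = -((-1:ℤ)^a) := by rw [pow_add]; ring
    rw [hpp]; ring
end

section
/- Let λ = (λ_1, λ_2) be a strict partition with both parts odd. Then the irreducible projective (spin) character ⟨λ⟩ of the symmetric group evaluated at the class λ equals −1, i.e., the signed weighted count ∑_T wt(T) over bar tableaux T of shape λ and type λ equals −1. -/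
/-! Auxiliary -/

def fA (a b : ℕ) : ℕ → ℕ → ℕ := fun i j =>
  if i = 0 ∧ j < a then 1 else if i = 1 ∧ j < b then 2 else 0

def fB (a b : ℕ) : ℕ → ℕ → ℕ := fun i j =>
  if i = 0 ∧ j < a - b then 1 else if i = 0 ∧ j < a then 2
  else if i = 1 ∧ j < b then 1 else 0

lemma sort_eq_of_sorted {l : List ℕ} (h : List.Pairwise (· ≤ ·) l) :
    ((↑l : Multiset ℕ).sort (· ≤ ·)) = l := by
  refine List.Perm.eq_of_pairwise' (Multiset.pairwise_sort _ _) h ?_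
  exact Multiset.coe_eq_coe.mp (by rw [Multiset.sort_eq])

lemma sort_single (x : ℕ) : ((↑[x] : Multiset ℕ).sort (· ≤ ·)) = [x] :=
  sort_eq_of_sorted (by simp)

lemma sort_pair {x y : ℕ} (h : x ≤ y) : ((↑[x, y] : Multiset ℕ).sort (· ≤ ·)) = [x, y] :=
  sort_eq_of_sorted (by simp [h])

lemma msMax_pair (x y : ℕ) : msMax (↑[x, y] : Multiset ℕ) = max x y := by
  have hperm : (↑[x, y] : Multiset ℕ).toList.Perm [x, y] :=
    Multiset.coe_eq_coe.mp (by rw [Multiset.coe_toList])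
  have : LeftCommutative (max : ℕ → ℕ → ℕ) := ⟨fun a b c => max_left_comm a b c⟩
  rw [msMax, hperm.foldr_eq]
  simp [max_assoc]

lemma barFactor_single (x : ℕ) : barFactor [x] [] = 1 := by
  simp [barFactor]

lemma barFactor_pair_single {x y : ℕ} (h : y ≠ x) : barFactor [x, y] [x] = 1 := by
  have hd : (↑[x, y] : Multiset ℕ) - ↑[x] = {y} := by
    show (x ::ₘ y ::ₘ 0) - (x ::ₘ 0) = {y}
    rw [Multiset.sub_cons, Multiset.erase_cons_head]; simp
  have ha : (↑[x] : Multiset ℕ) - ↑[x, y] = 0 := by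
    show (x ::ₘ 0) - (x ::ₘ y ::ₘ 0) = 0
    rw [Multiset.sub_cons, Multiset.erase_cons_head]; simp
  simp only [barFactor, hd, ha, if_pos rfl, Multiset.card_singleton, if_pos rfl,
    Multiset.sum_singleton, List.length_cons, List.length_singleton]
  rw [List.idxOf_cons_ne _ (fun hh => h hh.symm)]
  simp

lemma barFactor_top_gt {x y z : ℕ} (hzx : z ≠ x) (hzy : z ≠ y) (hyx : y ≠ x)
    (hx : Odd x) (hy : Odd y) : barFactor [x, y] [z, y] = 2 := by
  have hd : (↑[x, y] : Multiset ℕ) - ↑[z, y] = {x} := by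
    show (x ::ₘ y ::ₘ 0) - (z ::ₘ y ::ₘ 0) = {x}
    rw [Multiset.sub_cons, Multiset.erase_of_notMem (by simp [hzx, hzy]),
      Multiset.sub_cons, Multiset.erase_cons_tail _ (fun h => hyx h.symm)]
    simp
  have ha : (↑[z, y] : Multiset ℕ) - ↑[x, y] = {z} := by
    show (z ::ₘ y ::ₘ 0) - (x ::ₘ y ::ₘ 0) = {z}
    rw [Multiset.sub_cons, Multiset.erase_of_notMem (by simp [Ne.symm hzx, Ne.symm hyx]),
      Multiset.sub_cons, Multiset.erase_cons_tail _ hzy]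
    simp
  have hne : ({z} : Multiset ℕ) ≠ 0 := by simp
  have hep : epsP [x, y] = 0 := by
    simp [epsP, List.countP, Nat.odd_iff.mp hx, Nat.odd_iff.mp hy, List.countP.go]
  simp only [barFactor, hd, ha, if_neg hne, Multiset.sum_singleton, hep,
    List.idxOf_cons_self]
  norm_num

lemma barFactor_top_lt {x y z : ℕ} (hzx : z ≠ x) (hzy : z ≠ y) (hyx : y ≠ x)
    (hx : Odd x) (hy : Odd y) : barFactor [x, y] [y, z] = -2 := by
  have hd : (↑[x, y] : Multiset ℕ) - ↑[y, z] = {x} := by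
    show (x ::ₘ y ::ₘ 0) - (y ::ₘ z ::ₘ 0) = {x}
    rw [Multiset.sub_cons, Multiset.erase_cons_tail _ (fun h => hyx h.symm),
      Multiset.erase_cons_head, Multiset.sub_cons,
      Multiset.erase_of_notMem (by simp [hzx])]
    simp
  have ha : (↑[y, z] : Multiset ℕ) - ↑[x, y] = {z} := by
    show (y ::ₘ z ::ₘ 0) - (x ::ₘ y ::ₘ 0) = {z}
    rw [Multiset.sub_cons, Multiset.erase_of_notMem (by simp [Ne.symm hyx, Ne.symm hzx]),
      Multiset.sub_cons, Multiset.erase_cons_head]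
    simp
  have hne : ({z} : Multiset ℕ) ≠ 0 := by simp
  have hep : epsP [x, y] = 0 := by
    simp [epsP, List.countP, Nat.odd_iff.mp hx, Nat.odd_iff.mp hy, List.countP.go]
  simp only [barFactor, hd, ha, if_neg hne, Multiset.sum_singleton,
    List.idxOf_cons_self, hep]
  rw [List.idxOf_cons_ne _ (fun h => hzy h.symm)]
  norm_num

lemma barFactor_bot {u w : ℕ} (hwu : w < u) (hep : epsP [u, w] = 1) :
    barFactor [u, w] [] = (-1 : ℤ) ^ (1 + u) := by
  have hd : (↑[u, w] : Multiset ℕ) - ↑([] : List ℕ) = ↑[u, w] := by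
    rw [Multiset.coe_nil, Multiset.sub_zero]
  have ha : (↑([] : List ℕ) : Multiset ℕ) - ↑[u, w] = 0 := by
    rw [Multiset.coe_nil, Multiset.zero_sub]
  have hcard : Multiset.card (↑[u, w] : Multiset ℕ) = 2 := by simp
  have hsum : (↑[u, w] : Multiset ℕ).sum = u + w := by simp
  have hmax : msMax (↑[u, w] : Multiset ℕ) = u := by
    rw [msMax_pair]; exact max_eq_left hwu.le
  simp only [barFactor, hd, ha, hcard, hsum, hmax, hep]
  rw [if_true, if_neg (by norm_num), Nat.add_sub_cancel_left,
    List.idxOf_cons_self, List.idxOf_cons_ne _ (fun h => hwu.ne h.symm)]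
  norm_num [pow_succ]

lemma pc0 {f : ℕ → ℕ → ℕ} {a b v : ℕ} :
    partialCount [a, b] f v 0 = ((Finset.range a).filter (fun j => f 0 j ≤ v)).card := rfl

lemma pc1 {f : ℕ → ℕ → ℕ} {a b v : ℕ} :
    partialCount [a, b] f v 1 = ((Finset.range b).filter (fun j => f 1 j ≤ v)).card := rfl

lemma pc_all {n v : ℕ} {g : ℕ → ℕ} (h : ∀ j < n, g j ≤ v) :
    ((Finset.range n).filter (fun j => g j ≤ v)).card = n := by
  rw [Finset.filter_true_of_mem (fun j hj => h j (Finset.mem_range.mp hj)), Finset.card_range]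

lemma pc_none {n v : ℕ} {g : ℕ → ℕ} (h : ∀ j < n, ¬ g j ≤ v) :
    ((Finset.range n).filter (fun j => g j ≤ v)).card = 0 := by
  rw [Finset.filter_false_of_mem (fun j hj => h j (Finset.mem_range.mp hj)), Finset.card_empty]

lemma subShape_nil {f : ℕ → ℕ → ℕ} {a b v : ℕ}
    (h0 : partialCount [a, b] f v 0 = 0) (h1 : partialCount [a, b] f v 1 = 0) :
    subShape [a, b] f v = [] := by
  have hl : ((List.range ([a, b] : List ℕ).length).map (fun i => partialCount [a, b] f v i)).filter
      (fun c => decide (0 < c)) = [] := by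
    show ([0, 1].map (fun i => partialCount [a, b] f v i)).filter (fun c => decide (0 < c)) = []
    simp [h0, h1]
  rw [subShape, hl]
  rw [show (↑([] : List ℕ) : Multiset ℕ) = 0 from rfl]
  simp

lemma subShape_single {f : ℕ → ℕ → ℕ} {a b v x : ℕ}
    (h0 : partialCount [a, b] f v 0 = x) (h1 : partialCount [a, b] f v 1 = 0) (hx : 0 < x) :
    subShape [a, b] f v = [x] := by
  have hl : ((List.range ([a, b] : List ℕ).length).map (fun i => partialCount [a, b] f v i)).filter
      (fun c => decide (0 < c)) = [x] := by
    show ([0, 1].map (fun i => partialCount [a, b] f v i)).filter (fun c => decide (0 < c)) = [x]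
    simp [h0, h1, hx]
  rw [subShape, hl, sort_single]
  rfl

lemma subShape_pair {f : ℕ → ℕ → ℕ} {a b v x y : ℕ}
    (h0 : partialCount [a, b] f v 0 = x) (h1 : partialCount [a, b] f v 1 = y)
    (hxy : y ≤ x) (hy : 0 < y) :
    subShape [a, b] f v = [x, y] := by
  have hl : ((List.range ([a, b] : List ℕ).length).map (fun i => partialCount [a, b] f v i)).filter
      (fun c => decide (0 < c)) = [x, y] := by
    show ([0, 1].map (fun i => partialCount [a, b] f v i)).filter (fun c => decide (0 < c)) = [x, y]
    simp [h0, h1, hy, lt_of_lt_of_le hy hxy]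
  have hcoe : (↑([x, y] : List ℕ) : Multiset ℕ) = ↑([y, x] : List ℕ) :=
    Multiset.coe_eq_coe.mpr (List.Perm.swap _ _ _)
  rw [subShape, hl, hcoe, sort_pair hxy]
  rfl

section weights
variable {a b : ℕ} (hab : b < a) (hb : 0 < b)

lemma fA0 {j : ℕ} (hj : j < a) : fA a b 0 j = 1 := by simp [fA, hj]
lemma fA1 {j : ℕ} (hj : j < b) : fA a b 1 j = 2 := by simp [fA, hj]
lemma fB0lt {j : ℕ} (hj : j < a - b) : fB a b 0 j = 1 := by simp [fB, hj]
lemma fB0ge {j : ℕ} (hj : j < a) (hj' : a - b ≤ j) : fB a b 0 j = 2 := by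
  simp [fB, hj, Nat.not_lt.mpr hj']
lemma fB1 {j : ℕ} (hj : j < b) : fB a b 1 j = 1 := by simp [fB, hj]

lemma pcA_0 : partialCount [a, b] (fA a b) 0 0 = 0 := by
  rw [pc0]; exact pc_none (fun j hj => by rw [fA0 hj]; norm_num)
lemma pcA_0' : partialCount [a, b] (fA a b) 0 1 = 0 := by
  rw [pc1]; exact pc_none (fun j hj => by rw [fA1 hj]; norm_num)
lemma pcA_10 : partialCount [a, b] (fA a b) 1 0 = a := by
  rw [pc0]; exact pc_all (fun j hj => by rw [fA0 hj])
lemma pcA_11 : partialCount [a, b] (fA a b) 1 1 = 0 := by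
  rw [pc1]; exact pc_none (fun j hj => by rw [fA1 hj]; norm_num)
lemma pcA_20 : partialCount [a, b] (fA a b) 2 0 = a := by
  rw [pc0]; exact pc_all (fun j hj => by rw [fA0 hj]; norm_num)
lemma pcA_21 : partialCount [a, b] (fA a b) 2 1 = b := by
  rw [pc1]; exact pc_all (fun j hj => by rw [fA1 hj])

lemma pcB_0 : partialCount [a, b] (fB a b) 0 0 = 0 := by
  rw [pc0]
  refine pc_none (fun j hj => ?_)
  rcases Nat.lt_or_ge j (a - b) with h | h
  · rw [fB0lt h]; norm_num
  · rw [fB0ge hj h]; norm_num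
lemma pcB_0' : partialCount [a, b] (fB a b) 0 1 = 0 := by
  rw [pc1]; exact pc_none (fun j hj => by rw [fB1 hj]; norm_num)
lemma pcB_10 : partialCount [a, b] (fB a b) 1 0 = a - b := by
  rw [pc0]
  have : (Finset.range a).filter (fun j => fB a b 0 j ≤ 1) = Finset.range (a - b) := by
    ext j
    simp only [Finset.mem_filter, Finset.mem_range]
    constructor
    · rintro ⟨hj, hle⟩
      by_contra h
      rw [fB0ge hj (Nat.not_lt.mp h)] at hle
      norm_num at hle
    · intro h
      exact ⟨h.trans_le (Nat.sub_le a b), by rw [fB0lt h]⟩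
  rw [this, Finset.card_range]
lemma pcB_11 : partialCount [a, b] (fB a b) 1 1 = b := by
  rw [pc1]; exact pc_all (fun j hj => by rw [fB1 hj])
lemma pcB_20 : partialCount [a, b] (fB a b) 2 0 = a := by
  rw [pc0]
  refine pc_all (fun j hj => ?_)
  rcases Nat.lt_or_ge j (a - b) with h | h
  · rw [fB0lt h]; norm_num
  · rw [fB0ge hj h]
lemma pcB_21 : partialCount [a, b] (fB a b) 2 1 = b := by
  rw [pc1]; exact pc_all (fun j hj => by rw [fB1 hj]; norm_num)

lemma valueSetA (hab : b < a) (hb : 0 < b) : valueSet [a, b] (fA a b) = {1, 2} := by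
  have h0 : (Finset.range a).image (fA a b 0) = {1} := by
    rw [Finset.image_congr (g := fun _ => 1) (fun j hj => fA0 (Finset.mem_range.mp hj)),
      Finset.image_const ⟨0, Finset.mem_range.mpr (hb.trans hab)⟩]
  have h1 : (Finset.range b).image (fA a b 1) = {2} := by
    rw [Finset.image_congr (g := fun _ => 2) (fun j hj => fA1 (Finset.mem_range.mp hj)),
      Finset.image_const ⟨0, Finset.mem_range.mpr hb⟩]
  show (Finset.range 2).biUnion _ = _
  rw [show Finset.range 2 = {0, 1} from rfl]
  rw [Finset.biUnion_insert, Finset.singleton_biUnion]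
  show ((Finset.range a).image (fA a b 0)) ∪ ((Finset.range b).image (fA a b 1)) = {1, 2}
  rw [h0, h1]
  rfl

lemma valueSetB (hab : b < a) (hb : 0 < b) : valueSet [a, b] (fB a b) = {1, 2} := by
  have hc : 0 < a - b := Nat.sub_pos_of_lt hab
  have h0 : (Finset.range a).image (fB a b 0) = {1, 2} := by
    apply Finset.Subset.antisymm
    · intro x hx
      simp only [Finset.mem_image, Finset.mem_range] at hx
      obtain ⟨j, hj, rfl⟩ := hx
      rcases Nat.lt_or_ge j (a - b) with h | h
      · rw [fB0lt h]; simp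
      · rw [fB0ge hj h]; simp
    · intro x hx
      simp only [Finset.mem_insert, Finset.mem_singleton] at hx
      rcases hx with rfl | rfl
      · exact Finset.mem_image.mpr ⟨0, Finset.mem_range.mpr (hc.trans_le (Nat.sub_le a b)), fB0lt hc⟩
      · exact Finset.mem_image.mpr ⟨a - b, Finset.mem_range.mpr (Nat.sub_lt (hb.trans hab) hb), fB0ge (Nat.sub_lt (hb.trans hab) hb) le_rfl⟩
  have h1 : (Finset.range b).image (fB a b 1) = {1} := by
    rw [Finset.image_congr (g := fun _ => 1) (fun j hj => fB1 (Finset.mem_range.mp hj)),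
      Finset.image_const ⟨0, Finset.mem_range.mpr hb⟩]
  show (Finset.range 2).biUnion _ = _
  rw [show Finset.range 2 = {0, 1} from rfl]
  rw [Finset.biUnion_insert, Finset.singleton_biUnion]
  show ((Finset.range a).image (fB a b 0)) ∪ ((Finset.range b).image (fB a b 1)) = {1, 2}
  rw [h0, h1]
  ext x; simp; tauto

lemma weight_expand {f : ℕ → ℕ → ℕ} (hv : valueSet [a, b] f = {1, 2}) :
    weight [a, b] f = barFactor (subShape [a, b] f 1) (subShape [a, b] f 0) *
      (barFactor (subShape [a, b] f 2) (subShape [a, b] f 1) * 1) := by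
  have hs : Finset.sort ({1, 2} : Finset ℕ) (· ≤ ·) = [1, 2] := by
    have hval : ({1, 2} : Finset ℕ).val = (↑([1, 2] : List ℕ) : Multiset ℕ) := by decide
    show Multiset.sort ({1, 2} : Finset ℕ).val _ = _
    rw [hval, sort_pair (by norm_num)]
  rw [weight, hv, hs]
  rfl

end weights

lemma subShape_pair' {f : ℕ → ℕ → ℕ} {a b v x y : ℕ}
    (h0 : partialCount [a, b] f v 0 = y) (h1 : partialCount [a, b] f v 1 = x)
    (hxy : y ≤ x) (hy : 0 < y) :
    subShape [a, b] f v = [x, y] := by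
  have hl : ((List.range ([a, b] : List ℕ).length).map (fun i => partialCount [a, b] f v i)).filter
      (fun c => decide (0 < c)) = [y, x] := by
    show ([0, 1].map (fun i => partialCount [a, b] f v i)).filter (fun c => decide (0 < c)) = [y, x]
    simp [h0, h1, hy, lt_of_lt_of_le hy hxy]
  rw [subShape, hl, sort_pair hxy]
  rfl

lemma weightA {a b : ℕ} (hab : b < a) (hb : 0 < b) : weight [a, b] (fA a b) = 1 := by
  rw [weight_expand (valueSetA hab hb),
    subShape_nil (pcA_0 (a := a) (b := b)) pcA_0',
    subShape_single pcA_10 pcA_11 (hb.trans hab),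
    subShape_pair pcA_20 pcA_21 hab.le hb,
    barFactor_single, barFactor_pair_single hab.ne]
  ring

lemma weightB {a b : ℕ} (hab : b < a) (hb : 0 < b) (ha : Odd a) (hbo : Odd b) :
    weight [a, b] (fB a b) = -2 := by
  set c := a - b with hcdef
  have hc : 0 < c := Nat.sub_pos_of_lt hab
  have hceven : Even c := Nat.Odd.sub_odd ha hbo
  have hcb : c ≠ b := by
    intro h
    rw [h] at hceven
    exact (Nat.not_even_iff_odd.mpr hbo) hceven
  have hca : c ≠ a := by
    intro h
    have := Nat.sub_lt (hb.trans hab) hb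
    rw [← hcdef] at this; omega
  have hep : ∀ u w : ℕ, u % 2 = 0 → w % 2 = 1 → epsP [u, w] = 1 := by
    intro u w hu hw
    simp [epsP, List.countP, List.countP.go, hu, hw]
  have hep' : ∀ u w : ℕ, u % 2 = 1 → w % 2 = 0 → epsP [u, w] = 1 := by
    intro u w hu hw
    simp [epsP, List.countP, List.countP.go, hu, hw]
  rw [weight_expand (valueSetB hab hb),
    subShape_nil (pcB_0 (a := a) (b := b)) pcB_0',
    subShape_pair pcB_20 pcB_21 hab.le hb]
  rcases Nat.lt_or_ge b c with hbc | hcb'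
  · rw [subShape_pair pcB_10 pcB_11 hbc.le hb,
      barFactor_bot hbc (hep c b (Nat.even_iff.mp hceven) (Nat.odd_iff.mp hbo)),
      barFactor_top_gt hca hcb hab.ne ha hbo,
      Odd.neg_one_pow (by rw [Nat.odd_iff, Nat.add_mod, Nat.even_iff.mp hceven])]
    ring
  · have hcb2 : c < b := lt_of_le_of_ne hcb' hcb
    rw [subShape_pair' pcB_10 pcB_11 hcb2.le hc,
      barFactor_bot hcb2 (hep' b c (Nat.odd_iff.mp hbo) (Nat.even_iff.mp hceven)),
      barFactor_top_lt hca hcb hab.ne ha hbo,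
      Even.neg_one_pow (by rw [Nat.even_iff, Nat.add_mod, Nat.odd_iff.mp hbo])]
    ring

lemma cc {f : ℕ → ℕ → ℕ} {a b v : ℕ} :
    cellCount [a, b] f v = ((Finset.range a).filter (fun j => f 0 j = v)).card +
      ((Finset.range b).filter (fun j => f 1 j = v)).card := by
  rw [cellCount, show ([a, b] : List ℕ).length = 2 from rfl,
    Finset.sum_range_succ, Finset.sum_range_one]
  rfl

lemma cc_all {n v : ℕ} {g : ℕ → ℕ} (h : ∀ j < n, g j = v) :
    ((Finset.range n).filter (fun j => g j = v)).card = n := by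
  rw [Finset.filter_true_of_mem (fun j hj => h j (Finset.mem_range.mp hj)), Finset.card_range]

lemma cc_none {n v : ℕ} {g : ℕ → ℕ} (h : ∀ j < n, g j ≠ v) :
    ((Finset.range n).filter (fun j => g j = v)).card = 0 := by
  rw [Finset.filter_false_of_mem (fun j hj => h j (Finset.mem_range.mp hj)), Finset.card_empty]

lemma cell_pos {f : ℕ → ℕ → ℕ} {a b i j : ℕ} (hi : i < 2) (hj : j < [a, b].getD i 0) :
    cellCount [a, b] f (f i j) ≠ 0 := by
  rw [cc]
  interval_cases i
  · have : j ∈ (Finset.range a).filter (fun k => f 0 k = f 0 j) :=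
      Finset.mem_filter.mpr ⟨Finset.mem_range.mpr hj, rfl⟩
    have := Finset.card_pos.mpr ⟨j, this⟩
    omega
  · have : j ∈ (Finset.range b).filter (fun k => f 1 k = f 1 j) :=
      Finset.mem_filter.mpr ⟨Finset.mem_range.mpr hj, rfl⟩
    have := Finset.card_pos.mpr ⟨j, this⟩
    omega

lemma filter_downclosed (n : ℕ) (P : ℕ → Prop) [DecidablePred P]
    (h : ∀ j j', j ≤ j' → j' < n → P j' → P j) :
    (Finset.range n).filter P = Finset.range (((Finset.range n).filter P).card) := by
  induction n with
  | zero => simp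
  | succ n ih =>
    by_cases hP : P n
    · have hall : (Finset.range (n + 1)).filter P = Finset.range (n + 1) := by
        rw [Finset.filter_true_of_mem]
        intro j hj
        exact h j n (Nat.lt_succ_iff.mp (Finset.mem_range.mp hj)) (Nat.lt_succ_self n) hP
      rw [hall, Finset.card_range]
    · have hsplit : (Finset.range (n + 1)).filter P = (Finset.range n).filter P := by
        rw [Finset.range_add_one, Finset.filter_insert, if_neg hP]
      rw [hsplit]
      exact ih (fun j j' hle hlt => h j j' hle (hlt.trans (Nat.lt_succ_self n)))

lemma row_struct {n : ℕ} {g : ℕ → ℕ}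
    (hmono : ∀ j j', j ≤ j' → j' < n → g j ≤ g j')
    (hval : ∀ j < n, g j = 1 ∨ g j = 2) :
    ∃ t, t ≤ n ∧ (∀ j < n, g j = if j < t then 1 else 2) ∧
      ((Finset.range n).filter (fun j => g j = 1)).card = t := by
  set t := ((Finset.range n).filter (fun j => g j = 1)).card with ht
  have hdc : (Finset.range n).filter (fun j => g j = 1) = Finset.range t := by
    rw [ht]
    apply filter_downclosed
    intro j j' hle hlt hgj'
    rcases hval j (lt_of_le_of_lt hle hlt) with h | h
    · exact h
    · have := hmono j j' hle hlt
      omega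
  refine ⟨t, ?_, ?_, rfl⟩
  · rw [ht]
    exact le_trans (Finset.card_filter_le _ _) (by rw [Finset.card_range])
  · intro j hj
    have hmem : j ∈ (Finset.range n).filter (fun k => g k = 1) ↔ j < t := by
      rw [hdc, Finset.mem_range]
    rw [Finset.mem_filter, Finset.mem_range] at hmem
    by_cases hjt : j < t
    · rw [if_pos hjt]
      exact (hmem.mpr hjt).2
    · rw [if_neg hjt]
      rcases hval j hj with h | h
      · exact absurd (hmem.mp ⟨hj, h⟩) hjt
      · exact h

section memb
variable {a b : ℕ}

lemma pcA_v0 {v : ℕ} (hv : 1 ≤ v) : partialCount [a, b] (fA a b) v 0 = a := by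
  rw [pc0]; exact pc_all (fun j hj => by rw [fA0 hj]; omega)
lemma pcA_v1 {v : ℕ} (hv : 2 ≤ v) : partialCount [a, b] (fA a b) v 1 = b := by
  rw [pc1]; exact pc_all (fun j hj => by rw [fA1 hj]; omega)
lemma pcB_v0 {v : ℕ} (hv : 2 ≤ v) : partialCount [a, b] (fB a b) v 0 = a := by
  rw [pc0]
  refine pc_all (fun j hj => ?_)
  rcases Nat.lt_or_ge j (a - b) with h | h
  · rw [fB0lt h]; omega
  · rw [fB0ge hj h]; omega
lemma pcB_v1 {v : ℕ} (hv : 1 ≤ v) : partialCount [a, b] (fB a b) v 1 = b := by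
  rw [pc1]; exact pc_all (fun j hj => by rw [fB1 hj]; omega)

lemma ccA1 : cellCount [a, b] (fA a b) 1 = a := by
  rw [cc, cc_all (fun j hj => fA0 hj), cc_none (fun j hj => by rw [fA1 hj]; omega)]
  omega
lemma ccA2 : cellCount [a, b] (fA a b) 2 = b := by
  rw [cc, cc_all (fun j hj => fA1 hj), cc_none (fun j hj => by rw [fA0 hj]; omega)]
  omega
lemma ccA_other {v : ℕ} (h1 : v ≠ 1) (h2 : v ≠ 2) : cellCount [a, b] (fA a b) v = 0 := by
  rw [cc, cc_none (fun j hj => by rw [fA0 hj]; omega),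
    cc_none (fun j hj => by rw [fA1 hj]; omega)]

lemma ccB1 (hab : b < a) : cellCount [a, b] (fB a b) 1 = a := by
  have h0 : ((Finset.range a).filter (fun j => fB a b 0 j = 1)).card = a - b := by
    have : (Finset.range a).filter (fun j => fB a b 0 j = 1) = Finset.range (a - b) := by
      ext j
      simp only [Finset.mem_filter, Finset.mem_range]
      constructor
      · rintro ⟨hj, he⟩
        by_contra h
        rw [fB0ge hj (Nat.not_lt.mp h)] at he
        omega
      · intro h
        exact ⟨h.trans_le (Nat.sub_le a b), fB0lt h⟩
    rw [this, Finset.card_range]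
  rw [cc, h0, cc_all (fun j hj => fB1 hj)]
  omega
lemma ccB2 (hab : b < a) : cellCount [a, b] (fB a b) 2 = b := by
  have h0 : (Finset.range a).filter (fun j => fB a b 0 j = 2)
      = Finset.range a \ Finset.range (a - b) := by
    ext j
    simp only [Finset.mem_filter, Finset.mem_range, Finset.mem_sdiff]
    constructor
    · rintro ⟨hj, he⟩
      refine ⟨hj, fun h => ?_⟩
      rw [fB0lt h] at he; omega
    · rintro ⟨hj, h⟩
      exact ⟨hj, fB0ge hj (Nat.not_lt.mp h)⟩
  rw [cc, h0, Finset.card_sdiff_of_subset (Finset.range_subset_range.mpr (Nat.sub_le a b)),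
    Finset.card_range, Finset.card_range,
    cc_none (fun j hj => by rw [fB1 hj]; omega)]
  omega
lemma ccB_other {v : ℕ} (h1 : v ≠ 1) (h2 : v ≠ 2) : cellCount [a, b] (fB a b) v = 0 := by
  rw [cc]
  rw [cc_none (fun j hj => ?_), cc_none (fun j hj => by rw [fB1 hj]; omega)]
  rcases Nat.lt_or_ge j (a - b) with h | h
  · rw [fB0lt h]; omega
  · rw [fB0ge hj h]; omega

lemma mem_rowsOf {f : ℕ → ℕ → ℕ} {v i : ℕ} :
    i ∈ rowsOf [a, b] f v ↔ i < 2 ∧ ∃ j < ([a, b] : List ℕ).getD i 0, f i j = v := by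
  rw [rowsOf, Finset.mem_filter, Finset.mem_range,
    show ([a, b] : List ℕ).length = 2 from rfl]
  simp only [Finset.mem_range]

lemma rowsOf_card_le {f : ℕ → ℕ → ℕ} {v : ℕ} : (rowsOf [a, b] f v).card ≤ 2 := by
  have : rowsOf [a, b] f v ⊆ Finset.range 2 := by
    rw [rowsOf, show ([a, b] : List ℕ).length = 2 from rfl]
    exact Finset.filter_subset _ _
  calc (rowsOf [a, b] f v).card ≤ (Finset.range 2).card := Finset.card_le_card this
    _ = 2 := Finset.card_range 2

lemma rowsOf_eq_of_card {f : ℕ → ℕ → ℕ} {v : ℕ} (h : (rowsOf [a, b] f v).card = 2) :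
    ∀ i < 2, i ∈ rowsOf [a, b] f v := by
  have hsub : rowsOf [a, b] f v ⊆ Finset.range 2 := by
    rw [rowsOf, show ([a, b] : List ℕ).length = 2 from rfl]
    exact Finset.filter_subset _ _
  have := Finset.eq_of_subset_of_card_le hsub (by rw [Finset.card_range, h])
  intro i hi
  rw [this]
  exact Finset.mem_range.mpr hi

lemma canonicalA : Canonical [a, b] (fA a b) := by
  intro i j h
  rw [show ([a, b] : List ℕ).length = 2 from rfl] at h
  by_cases h1 : i = 0 ∧ j < a
  · obtain ⟨rfl, hja⟩ := h1
    exact absurd ⟨by norm_num, hja⟩ h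
  by_cases h2 : i = 1 ∧ j < b
  · obtain ⟨rfl, hjb⟩ := h2
    exact absurd ⟨by norm_num, hjb⟩ h
  simp [fA, h1, h2]

lemma canonicalB : Canonical [a, b] (fB a b) := by
  intro i j h
  rw [show ([a, b] : List ℕ).length = 2 from rfl] at h
  by_cases h1 : i = 0 ∧ j < a
  · obtain ⟨rfl, hja⟩ := h1
    exact absurd ⟨by norm_num, hja⟩ h
  by_cases h2 : i = 1 ∧ j < b
  · obtain ⟨rfl, hjb⟩ := h2
    exact absurd ⟨by norm_num, hjb⟩ h
  have h1' : ¬(i = 0 ∧ j < a - b) := by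
    intro ⟨hi, hj⟩; exact h1 ⟨hi, hj.trans_le (Nat.sub_le a b)⟩
  simp [fB, h1, h2, h1']

end memb

section bt
variable {a b : ℕ}

lemma barTableauA (hab : b < a) (hb : 0 < b) (ha : Odd a) (hbo : Odd b) :
    IsBarTableau [a, b] (fA a b) := by
  refine ⟨?_, ?_, ?_, ?_, ?_⟩
  · intro i j hi hj
    rw [show ([a, b] : List ℕ).length = 2 from rfl] at hi
    interval_cases i
    · rw [fA0 (show j < a from hj)]
    · rw [fA1 (show j < b from hj)]; omega
  · intro i j j' hi hle hlt
    rw [show ([a, b] : List ℕ).length = 2 from rfl] at hi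
    interval_cases i
    · rw [fA0 (show j < a from lt_of_le_of_lt hle hlt), fA0 (show j' < a from hlt)]
    · rw [fA1 (show j < b from lt_of_le_of_lt hle hlt), fA1 (show j' < b from hlt)]
  · intro v hv
    by_cases h1 : v = 1
    · subst h1; right; rw [ccA1]; exact ha
    by_cases h2 : v = 2
    · subst h2; right; rw [ccA2]; exact hbo
    · left; exact ccA_other h1 h2
  · intro v hv
    refine ⟨rowsOf_card_le, fun hcard => ?_⟩
    exfalso
    have h0 := rowsOf_eq_of_card hcard 0 (by norm_num)
    have h1 := rowsOf_eq_of_card hcard 1 (by norm_num)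
    rw [mem_rowsOf] at h0 h1
    obtain ⟨-, j0, hj0, he0⟩ := h0
    obtain ⟨-, j1, hj1, he1⟩ := h1
    rw [fA0 (show j0 < a from hj0)] at he0
    rw [fA1 (show j1 < b from hj1)] at he1
    omega
  · intro v i i' hv hii hi' hp hp'
    rw [show ([a, b] : List ℕ).length = 2 from rfl] at hi'
    have hi0 : i = 0 := by omega
    have hi1 : i' = 1 := by omega
    subst hi0; subst hi1
    by_cases h2 : 2 ≤ v
    · rw [pcA_v0 hv, pcA_v1 h2]; omega
    · have hv1 : v = 1 := by omega
      subst hv1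
      exact absurd pcA_11 hp'

lemma hasTypeA : HasType2 [a, b] (fA a b) a b :=
  ⟨ccA1, ccA2, fun v hv => ccA_other (by omega) (by omega)⟩

lemma barTableauB (hab : b < a) (hb : 0 < b) (ha : Odd a) (hbo : Odd b) :
    IsBarTableau [a, b] (fB a b) := by
  have hc : 0 < a - b := Nat.sub_pos_of_lt hab
  have hceven : Even (a - b) := Nat.Odd.sub_odd ha hbo
  have hcb : a - b ≠ b := by
    intro h
    rw [h] at hceven
    exact (Nat.not_even_iff_odd.mpr hbo) hceven
  refine ⟨?_, ?_, ?_, ?_, ?_⟩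
  · intro i j hi hj
    rw [show ([a, b] : List ℕ).length = 2 from rfl] at hi
    interval_cases i
    · rcases Nat.lt_or_ge j (a - b) with h | h
      · rw [fB0lt h]
      · rw [fB0ge (show j < a from hj) h]; omega
    · rw [fB1 (show j < b from hj)]
  · intro i j j' hi hle hlt
    rw [show ([a, b] : List ℕ).length = 2 from rfl] at hi
    interval_cases i
    · rcases Nat.lt_or_ge j' (a - b) with h | h
      · rw [fB0lt h, fB0lt (lt_of_le_of_lt hle h)]
      · rw [fB0ge (show j' < a from hlt) h]
        rcases Nat.lt_or_ge j (a - b) with h' | h'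
        · rw [fB0lt h']; omega
        · rw [fB0ge (show j < a from lt_of_le_of_lt hle hlt) h']
    · rw [fB1 (show j < b from lt_of_le_of_lt hle hlt), fB1 (show j' < b from hlt)]
  · intro v hv
    by_cases h1 : v = 1
    · subst h1; right; rw [ccB1 hab]; exact ha
    by_cases h2 : v = 2
    · subst h2; right; rw [ccB2 hab]; exact hbo
    · left; exact ccB_other h1 h2
  · intro v hv
    refine ⟨rowsOf_card_le, fun hcard i hi => ?_⟩
    have h1 := rowsOf_eq_of_card hcard 1 (by norm_num)
    rw [mem_rowsOf] at h1
    obtain ⟨-, j1, hj1, he1⟩ := h1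
    rw [fB1 (show j1 < b from hj1)] at he1
    subst he1
    rw [mem_rowsOf] at hi
    obtain ⟨hi2, -⟩ := hi
    interval_cases i
    · exact fB0lt hc
    · exact fB1 hb
  · intro v i i' hv hii hi' hp hp'
    rw [show ([a, b] : List ℕ).length = 2 from rfl] at hi'
    have hi0 : i = 0 := by omega
    have hi1 : i' = 1 := by omega
    subst hi0; subst hi1
    by_cases h2 : 2 ≤ v
    · rw [pcB_v0 h2, pcB_v1 hv]; omega
    · have hv1 : v = 1 := by omega
      subst hv1
      rw [pcB_10, pcB_11]
      exact hcb

lemma hasTypeB (hab : b < a) : HasType2 [a, b] (fB a b) a b :=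
  ⟨ccB1 hab, ccB2 hab, fun v hv => ccB_other (by omega) (by omega)⟩

end bt

lemma classify_s4 {a b : ℕ} (hab : b < a) (hb : 0 < b) {f : ℕ → ℕ → ℕ}
    (hcan : Canonical [a, b] f) (hbt : IsBarTableau [a, b] f)
    (ht : HasType2 [a, b] f a b) : f = fA a b ∨ f = fB a b := by
  obtain ⟨h1, h2, h3, h4, h5⟩ := hbt
  obtain ⟨ht1, ht2, ht3⟩ := ht
  -- values on the shape are 1 or 2
  have hval : ∀ i, i < 2 → ∀ j, j < ([a, b] : List ℕ).getD i 0 → f i j = 1 ∨ f i j = 2 := by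
    intro i hi j hj
    have hge := h1 i j (show i < ([a, b] : List ℕ).length from hi) hj
    by_contra hcon
    push_neg at hcon
    have h3le : 3 ≤ f i j := by omega
    exact cell_pos hi hj (ht3 _ h3le)
  -- row structures
  obtain ⟨t0, ht0le, ht0val, ht0card⟩ :=
    row_struct (n := a) (g := f 0)
      (fun j j' hle hlt => h2 0 j j' (by norm_num) hle hlt)
      (fun j hj => hval 0 (by norm_num) j hj)
  obtain ⟨t1, ht1le, ht1val, ht1card⟩ :=
    row_struct (n := b) (g := f 1)
      (fun j j' hle hlt => h2 1 j j' (by norm_num) hle hlt)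
      (fun j hj => hval 1 (by norm_num) j hj)
  have hsum : t0 + t1 = a := by
    rw [← ht0card, ← ht1card, ← cc]
    exact ht1
  -- key dichotomy
  have hkey : t0 = a ∨ t1 = b := by
    by_contra hcon
    push_neg at hcon
    obtain ⟨hna, hnb⟩ := hcon
    have ht0a : t0 < a := lt_of_le_of_ne ht0le hna
    have ht1b : t1 < b := lt_of_le_of_ne ht1le hnb
    have hf0 : f 0 t0 = 2 := by rw [ht0val t0 ht0a]; simp
    have hf1 : f 1 t1 = 2 := by rw [ht1val t1 ht1b]; simp
    have h0m : (0 : ℕ) ∈ rowsOf [a, b] f 2 :=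
      mem_rowsOf.mpr ⟨by norm_num, t0, ht0a, hf0⟩
    have h1m : (1 : ℕ) ∈ rowsOf [a, b] f 2 :=
      mem_rowsOf.mpr ⟨by norm_num, t1, ht1b, hf1⟩
    have hcard2 : (rowsOf [a, b] f 2).card = 2 := by
      have hle2 : (rowsOf [a, b] f 2).card ≤ 2 := rowsOf_card_le
      have hsub : ({0, 1} : Finset ℕ) ⊆ rowsOf [a, b] f 2 := by
        intro x hx
        simp only [Finset.mem_insert, Finset.mem_singleton] at hx
        rcases hx with rfl | rfl
        · exact h0m
        · exact h1m
      have hc2 := Finset.card_le_card hsub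
      have : ({0, 1} : Finset ℕ).card = 2 := rfl
      omega
    have := (h4 2 (by norm_num)).2 hcard2 0 h0m
    -- f 0 0 = 2
    have hf00 : f 0 0 = if 0 < t0 then 1 else 2 := ht0val 0 (by omega)
    by_cases h0t : 0 < t0
    · rw [this] at hf00
      rw [if_pos h0t] at hf00
      omega
    · have : t0 = 0 := by omega
      omega
  rcases hkey with hA | hB
  · left
    have ht10 : t1 = 0 := by omega
    funext i j
    by_cases hsh : i < ([a, b] : List ℕ).length ∧ j < ([a, b] : List ℕ).getD i 0
    · obtain ⟨hi, hj⟩ := hsh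
      rw [show ([a, b] : List ℕ).length = 2 from rfl] at hi
      interval_cases i
      · have hj' : j < a := hj
        rw [ht0val j hj', fA0 hj', if_pos (by omega)]
      · have hj' : j < b := hj
        rw [ht1val j hj', fA1 hj', if_neg (by omega)]
    · rw [hcan i j hsh, canonicalA i j hsh]
  · right
    have ht0c : t0 = a - b := by omega
    funext i j
    by_cases hsh : i < ([a, b] : List ℕ).length ∧ j < ([a, b] : List ℕ).getD i 0
    · obtain ⟨hi, hj⟩ := hsh
      rw [show ([a, b] : List ℕ).length = 2 from rfl] at hi
      interval_cases i
      · have hj' : j < a := hj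
        rw [ht0val j hj']
        by_cases hjc : j < a - b
        · rw [fB0lt hjc, if_pos (by omega)]
        · rw [fB0ge hj' (by omega), if_neg (by omega)]
      · have hj' : j < b := hj
        rw [ht1val j hj', fB1 hj', if_pos (by omega)]
    · rw [hcan i j hsh, canonicalB i j hsh]

/-- For a strict partition `λ = (a, b)` with both parts odd, the spin character
value `⟨λ⟩(λ) = ∑_T wt(T)` over bar tableaux of shape `λ` and type `λ` is `-1`. -/
theorem spin_character_two_odd_parts (a b : ℕ) (hab : b < a) (hb : 0 < b)
    (ha : Odd a) (hbo : Odd b) :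
    ∑ᶠ f ∈ {f : ℕ → ℕ → ℕ |
        Canonical [a, b] f ∧ IsBarTableau [a, b] f ∧ HasType2 [a, b] f a b},
      weight [a, b] f = -1 := by
  have hset : {f : ℕ → ℕ → ℕ |
      Canonical [a, b] f ∧ IsBarTableau [a, b] f ∧ HasType2 [a, b] f a b}
      = {fA a b, fB a b} := by
    ext f
    constructor
    · rintro ⟨hcan, hbt, ht⟩
      exact classify_s4 hab hb hcan hbt ht
    · rintro (rfl | rfl)
      · exact ⟨canonicalA, barTableauA hab hb ha hbo, hasTypeA⟩
      · exact ⟨canonicalB, barTableauB hab hb ha hbo, hasTypeB hab⟩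
  have hne : fA a b ≠ fB a b := by
    intro h
    have := congrFun (congrFun h 1) 0
    rw [fA1 hb, fB1 hb] at this
    omega
  rw [hset, finsum_mem_pair hne, weightA hab hb, weightB hab hb ha hbo]
  norm_num
end

section
/- Let λ = (λ_1, λ_2) be a strict partition with λ_1 and λ_2 of different parity. Then there is exactly one bar tableau of shape λ and type (λ_1 + λ_2), namely the filling of all squares of S(λ) with 1. -/
/-- For a strict partition `(a, b)` with parts of different parity, the unique
bar tableau of type `(a + b)` is the all-ones filling. -/
theorem unique_bar_tableau_mixed_parity (a b : ℕ) (hab : b < a) (hb : 0 < b)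
    (hpar : a % 2 ≠ b % 2) :
    {f : ℕ → ℕ → ℕ |
        Canonical [a, b] f ∧ IsBarTableau [a, b] f ∧ HasType1 [a, b] f (a + b)} =
      {fun i j => if (i = 0 ∧ j < a) ∨ (i = 1 ∧ j < b) then 1 else 0} := by
  have hgetD0 : ([a, b] : List ℕ).getD 0 0 = a := rfl
  have hgetD1 : ([a, b] : List ℕ).getD 1 0 = b := rfl
  have hlen : ([a, b] : List ℕ).length = 2 := rfl
  set g : ℕ → ℕ → ℕ := fun i j => if (i = 0 ∧ j < a) ∨ (i = 1 ∧ j < b) then 1 else 0 with hg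
  have hg01 : ∀ i j, g i j = 0 ∨ g i j = 1 := by
    intro i j; by_cases h : (i = 0 ∧ j < a) ∨ (i = 1 ∧ j < b) <;> simp [hg, h]
  have hgshape : ∀ i j, i < 2 → j < ([a, b] : List ℕ).getD i 0 → g i j = 1 := by
    intro i j hi hj
    interval_cases i
    · rw [hgetD0] at hj; simp [hg, hj]
    · rw [hgetD1] at hj; simp [hg, hj]
  have hcc : ∀ f v, cellCount [a, b] f v =
      ((Finset.range a).filter (fun j => f 0 j = v)).card +
      ((Finset.range b).filter (fun j => f 1 j = v)).card := by
    intro f v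
    unfold cellCount
    rw [hlen, Finset.sum_range_succ, Finset.sum_range_succ, Finset.sum_range_zero]
    rw [hgetD0, hgetD1]; ring
  have hpc : ∀ f v i, partialCount [a, b] f v i =
      ((Finset.range (([a,b] : List ℕ).getD i 0)).filter (fun j => f i j ≤ v)).card := by
    intro f v i; rfl
  ext f
  simp only [Set.mem_setOf_eq, Set.mem_singleton_iff]
  constructor
  · rintro ⟨hcan, ⟨hpos, hmono, hodd, hrows, hdist⟩, h1, h2⟩
    have hcell : ∀ i j, i < 2 → j < ([a, b] : List ℕ).getD i 0 → f i j = 1 := by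
      intro i j hi hj
      by_contra hne
      have h2' : 2 ≤ f i j := by
        have := hpos i j (by rwa [hlen]) hj
        omega
      have hz := h2 (f i j) h2'
      rw [hcc, Nat.add_eq_zero] at hz
      interval_cases i
      · rw [hgetD0] at hj
        have := hz.1
        rw [Finset.card_eq_zero, Finset.filter_eq_empty_iff] at this
        exact this (Finset.mem_range.mpr hj) rfl
      · rw [hgetD1] at hj
        have := hz.2
        rw [Finset.card_eq_zero, Finset.filter_eq_empty_iff] at this
        exact this (Finset.mem_range.mpr hj) rfl
    funext i j
    by_cases h : i < 2 ∧ j < ([a, b] : List ℕ).getD i 0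
    · rw [hcell i j h.1 h.2, hgshape i j h.1 h.2]
    · rw [hcan i j (by rwa [hlen])]
      match i, h with
      | 0, h =>
        have : ¬ j < a := fun hj => h ⟨by omega, by rwa [hgetD0]⟩
        simp [hg, this]
      | 1, h =>
        have : ¬ j < b := fun hj => h ⟨by omega, by rwa [hgetD1]⟩
        simp [hg, this]
      | (n+2), h => simp [hg]
  · intro hf
    subst hf
    have hccg : ∀ v, cellCount [a, b] g v = if v = 1 then a + b else 0 := by
      intro v
      rw [hcc]
      by_cases hv : v = 1
      · subst hv
        have e0 : ((Finset.range a).filter (fun j => g 0 j = 1)) = Finset.range a :=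
          Finset.filter_true_of_mem (fun j hj =>
            hgshape 0 j (by omega) (by rw [hgetD0]; exact Finset.mem_range.mp hj))
        have e1 : ((Finset.range b).filter (fun j => g 1 j = 1)) = Finset.range b :=
          Finset.filter_true_of_mem (fun j hj =>
            hgshape 1 j (by omega) (by rw [hgetD1]; exact Finset.mem_range.mp hj))
        rw [e0, e1, Finset.card_range, Finset.card_range]
        simp
      · rw [Finset.filter_false_of_mem, Finset.filter_false_of_mem]
        · simp [hv]
        · intro j hj heq
          rw [hgshape 1 j (by omega) (by rw [hgetD1]; exact Finset.mem_range.mp hj)] at heq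
          omega
        · intro j hj heq
          rw [hgshape 0 j (by omega) (by rw [hgetD0]; exact Finset.mem_range.mp hj)] at heq
          omega
    have hpcg : ∀ v i, 1 ≤ v → i < 2 → partialCount [a, b] g v i = ([a,b] : List ℕ).getD i 0 := by
      intro v i hv hi
      rw [hpc, Finset.filter_true_of_mem, Finset.card_range]
      intro j hj
      rw [hgshape i j hi (Finset.mem_range.mp hj)]
      exact hv
    refine ⟨?_, ⟨?_, ?_, ?_, ?_, ?_⟩, ?_, ?_⟩
    · intro i j hij
      rw [hlen] at hij
      match i, hij with
      | 0, h =>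
        have : ¬ j < a := fun hj => h ⟨by omega, by rwa [hgetD0]⟩
        simp [hg, this]
      | 1, h =>
        have : ¬ j < b := fun hj => h ⟨by omega, by rwa [hgetD1]⟩
        simp [hg, this]
      | (n+2), h => simp [hg]
    · intro i j hi hj
      rw [hlen] at hi
      rw [hgshape i j hi hj]
    · intro i j j' hi hjj hj'
      rw [hlen] at hi
      rw [hgshape i j hi (by omega), hgshape i j' hi hj']
    · intro v hv
      rw [hccg]
      by_cases hv1 : v = 1
      · rw [if_pos hv1]; right; rw [Nat.odd_iff]; omega
      · rw [if_neg hv1]; left; rfl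
    · intro v hv
      constructor
      · calc (rowsOf [a, b] g v).card ≤ (Finset.range ([a,b] : List ℕ).length).card :=
              Finset.card_filter_le _ _
          _ = 2 := by rw [hlen, Finset.card_range]
      · intro hcard i hi
        unfold rowsOf at hi
        rw [Finset.mem_filter, Finset.mem_range, hlen] at hi
        obtain ⟨hi2, j, hj, hfj⟩ := hi
        rw [Finset.mem_range] at hj
        have : v = 1 := by
          rcases hg01 i j with h | h <;> rw [h] at hfj <;> omega
        rw [this]
        interval_cases i
        · exact hgshape 0 0 (by omega) (by rw [hgetD0]; omega)
        · exact hgshape 1 0 (by omega) (by rw [hgetD1]; omega)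
    · intro v i i' hv hii hi' hne hne'
      rw [hlen] at hi'
      have hi0 : i = 0 := by omega
      have hi1 : i' = 1 := by omega
      subst hi0; subst hi1
      rw [hpcg v 0 hv (by omega), hpcg v 1 hv (by omega), hgetD0, hgetD1]
      omega
    · rw [hccg]; simp
    · intro v hv
      rw [hccg]
      have : v ≠ 1 := by omega
      simp [this]
end

section
/- Let λ = (λ_1, λ_2) be a strict partition with both parts even. Then there is exactly one bar tableau of shape λ and type (λ_1 − 1, λ_2 + 1): fill the rightmost λ_2 + 1 squares of the first row with 2 and the remaining squares with 1. -/
lemma downset_mem_iff (S : Finset ℕ) (h : ∀ j ∈ S, ∀ k, k ≤ j → k ∈ S) :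
    ∀ j, j ∈ S ↔ j < S.card := by
  intro j
  constructor
  · intro hj
    by_contra hlt
    push_neg at hlt
    have hsub : Finset.range (j+1) ⊆ S := by
      intro k hk
      exact h j hj k (by simpa using Nat.lt_succ_iff.mp (Finset.mem_range.mp hk))
    have := Finset.card_le_card hsub
    simp at this
    omega
  · intro hj
    by_contra hns
    have hsub : S ⊆ Finset.range j := by
      intro k hk
      rw [Finset.mem_range]
      by_contra hkj
      push_neg at hkj
      exact hns (h k hk j hkj)
    have := Finset.card_le_card hsub
    simp at this
    omega

lemma cellCount_pair (A B : ℕ) (f : ℕ → ℕ → ℕ) (v : ℕ) :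
    cellCount [A, B] f v =
      ((Finset.range A).filter (fun j => f 0 j = v)).card +
        ((Finset.range B).filter (fun j => f 1 j = v)).card := by
  simp [cellCount, Finset.sum_range_succ]

lemma partialCount_pair0 (A B : ℕ) (f : ℕ → ℕ → ℕ) (v : ℕ) :
    partialCount [A, B] f v 0 = ((Finset.range A).filter (fun j => f 0 j ≤ v)).card := rfl

lemma partialCount_pair1 (A B : ℕ) (f : ℕ → ℕ → ℕ) (v : ℕ) :
    partialCount [A, B] f v 1 = ((Finset.range B).filter (fun j => f 1 j ≤ v)).card := rfl

lemma card_filter_le_range (c n : ℕ) :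
    ((Finset.range n).filter (fun j => c ≤ j)).card = n - c := by
  rcases le_or_gt c n with h | h
  · have : (Finset.range n).filter (fun j => c ≤ j) = Finset.range n \ Finset.range c := by
      ext j; simp only [Finset.mem_filter, Finset.mem_range, Finset.mem_sdiff]; omega
    rw [this, Finset.card_sdiff_of_subset (by simp [Finset.range_subset]; omega)]
    simp
  · have : (Finset.range n).filter (fun j => c ≤ j) = ∅ := by
      ext j; simp; omega
    rw [this]; simp; omega

/-- For a strict partition `(a, b)` with both parts even, the unique bar tableau
of type `(a - 1, b + 1)` fills the rightmost `b + 1` squares of the first row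
with `2` and the remaining squares with `1`. -/
theorem unique_bar_tableau_both_even (a b : ℕ) (hab : b < a) (hb : 0 < b)
    (ha : Even a) (hbe : Even b) :
    {f : ℕ → ℕ → ℕ |
        Canonical [a, b] f ∧ IsBarTableau [a, b] f ∧
          HasType2 [a, b] f (a - 1) (b + 1)} =
      {fun i j =>
        if i = 0 ∧ j < a then (if a - (b + 1) ≤ j then 2 else 1)
        else if i = 1 ∧ j < b then 1 else 0} := by
  obtain ⟨x, hax⟩ := ha
  obtain ⟨y, hby⟩ := hbe
  have hba : b + 2 ≤ a := by omega
  set G : ℕ → ℕ → ℕ := fun i j =>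
    if i = 0 ∧ j < a then (if a - (b + 1) ≤ j then 2 else 1)
    else if i = 1 ∧ j < b then 1 else 0 with hGdef
  have hG0 : ∀ j, j < a → G 0 j = if a - (b + 1) ≤ j then 2 else 1 := by
    intro j hj; simp [hGdef, hj]
  have hG0a : ∀ j, j < a - (b + 1) → G 0 j = 1 := by
    intro j hj; rw [hG0 j (by omega), if_neg (by omega)]
  have hG0b : ∀ j, a - (b + 1) ≤ j → j < a → G 0 j = 2 := by
    intro j hj hja; rw [hG0 j hja, if_pos hj]
  have hG1 : ∀ j, j < b → G 1 j = 1 := by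
    intro j hj; simp [hGdef, hj]
  -- filters for G
  have e1 : (Finset.range a).filter (fun j => G 0 j = 1) = Finset.range (a - (b + 1)) := by
    ext j
    simp only [Finset.mem_filter, Finset.mem_range]
    constructor
    · rintro ⟨hja, hv⟩
      by_contra h
      push_neg at h
      rw [hG0b j h hja] at hv
      omega
    · intro hjc
      exact ⟨by omega, hG0a j hjc⟩
  have e2 : (Finset.range a).filter (fun j => G 0 j = 2) =
      (Finset.range a).filter (fun j => a - (b + 1) ≤ j) := by
    apply Finset.filter_congr
    intro j hj
    rw [Finset.mem_range] at hj
    constructor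
    · intro hv
      by_contra h
      push_neg at h
      rw [hG0a j h] at hv
      omega
    · intro h
      exact hG0b j h hj
  have e3 : (Finset.range b).filter (fun j => G 1 j = 1) = Finset.range b :=
    Finset.filter_true_of_mem (fun j hj => hG1 j (Finset.mem_range.mp hj))
  have e4 : ∀ v, v ≠ 1 → v ≠ 2 → (Finset.range a).filter (fun j => G 0 j = v) = ∅ := by
    intro v h1 h2
    apply Finset.filter_false_of_mem
    intro j hj
    rw [Finset.mem_range] at hj
    rw [hG0 j hj]
    split <;> omega
  have e5 : ∀ v, v ≠ 1 → (Finset.range b).filter (fun j => G 1 j = v) = ∅ := by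
    intro v h1
    apply Finset.filter_false_of_mem
    intro j hj
    rw [Finset.mem_range] at hj
    rw [hG1 j hj]
    omega
  have cc1 : cellCount [a, b] G 1 = a - 1 := by
    rw [cellCount_pair, e1, e3]
    simp
    omega
  have cc2 : cellCount [a, b] G 2 = b + 1 := by
    rw [cellCount_pair, e2, e5 2 (by omega), card_filter_le_range]
    simp
    omega
  have cc3 : ∀ v, 3 ≤ v → cellCount [a, b] G v = 0 := by
    intro v hv
    rw [cellCount_pair, e4 v (by omega) (by omega), e5 v (by omega)]
    simp
  ext f
  simp only [Set.mem_setOf_eq, Set.mem_singleton_iff]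
  constructor
  · rintro ⟨hcan, ⟨hpos, hmono, hodd, hrows, hdist⟩, ht1, ht2, ht3⟩
    clear hodd hdist
    -- all values on the shape are 1 or 2
    have hval : ∀ i j, i < 2 → j < [a, b].getD i 0 → f i j = 1 ∨ f i j = 2 := by
      intro i j hi hj
      have h1 := hpos i j (by simpa using hi) hj
      by_contra hcon
      push_neg at hcon
      have h0 := ht3 (f i j) (by omega)
      unfold cellCount at h0
      have hterm := (Finset.sum_eq_zero_iff.mp h0) i (by simpa using hi)
      rw [Finset.card_eq_zero] at hterm
      have : j ∈ (Finset.range ([a, b].getD i 0)).filter (fun k => f i k = f i j) :=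
        Finset.mem_filter.mpr ⟨Finset.mem_range.mpr hj, rfl⟩
      rw [hterm] at this
      exact absurd this (Finset.notMem_empty j)
    have hval0 : ∀ j, j < a → f 0 j = 1 ∨ f 0 j = 2 := fun j hj =>
      hval 0 j (by omega) (by simpa using hj)
    have hval1 : ∀ j, j < b → f 1 j = 1 ∨ f 1 j = 2 := fun j hj =>
      hval 1 j (by omega) (by simpa using hj)
    set X0 := ((Finset.range a).filter (fun j => f 0 j = 1)).card with hX0def
    set X1 := ((Finset.range b).filter (fun j => f 1 j = 1)).card with hX1def
    set Y0 := ((Finset.range a).filter (fun j => f 0 j = 2)).card with hY0def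
    set Y1 := ((Finset.range b).filter (fun j => f 1 j = 2)).card with hY1def
    have hsum1 : X0 + X1 = a - 1 := by rw [hX0def, hX1def, ← cellCount_pair]; exact ht1
    have hsum2 : Y0 + Y1 = b + 1 := by rw [hY0def, hY1def, ← cellCount_pair]; exact ht2
    have key0 : X0 + Y0 = a := by
      have hcongr : (Finset.range a).filter (fun j => f 0 j = 2) =
          (Finset.range a).filter (fun j => ¬ f 0 j = 1) := by
        apply Finset.filter_congr
        intro j hj
        have := hval0 j (Finset.mem_range.mp hj)
        constructor <;> (intro h; omega)
      rw [hY0def, hcongr]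
      have := Finset.card_filter_add_card_filter_not
        (s := Finset.range a) (p := fun j => f 0 j = 1)
      simpa using this
    have key1 : X1 + Y1 = b := by
      have hcongr : (Finset.range b).filter (fun j => f 1 j = 2) =
          (Finset.range b).filter (fun j => ¬ f 1 j = 1) := by
        apply Finset.filter_congr
        intro j hj
        have := hval1 j (Finset.mem_range.mp hj)
        constructor <;> (intro h; omega)
      rw [hY1def, hcongr]
      have := Finset.card_filter_add_card_filter_not
        (s := Finset.range b) (p := fun j => f 1 j = 1)
      simpa using this
    have hY1zero : Y1 = 0 := by
      by_contra hY1ne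
      have h1mem : (1 : ℕ) ∈ rowsOf [a, b] f 2 := by
        have hne : ((Finset.range b).filter (fun j => f 1 j = 2)).Nonempty :=
          Finset.card_pos.mp (by omega)
        obtain ⟨j, hj⟩ := hne
        rw [Finset.mem_filter, Finset.mem_range] at hj
        exact Finset.mem_filter.mpr ⟨by simp, ⟨j, by simpa using hj.1, hj.2⟩⟩
      by_cases hY0z : Y0 = 0
      · have := Finset.card_filter_le (Finset.range b) (fun j => f 1 j = 2)
        simp at this
        omega
      · have h0mem : (0 : ℕ) ∈ rowsOf [a, b] f 2 := by
          have hne : ((Finset.range a).filter (fun j => f 0 j = 2)).Nonempty :=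
            Finset.card_pos.mp (by omega)
          obtain ⟨j, hj⟩ := hne
          rw [Finset.mem_filter, Finset.mem_range] at hj
          exact Finset.mem_filter.mpr ⟨by simp, ⟨j, by simpa using hj.1, hj.2⟩⟩
        have hcard2 : (rowsOf [a, b] f 2).card = 2 := by
          refine le_antisymm (hrows 2 (by omega)).1 ?_
          have hsub : ({0, 1} : Finset ℕ) ⊆ rowsOf [a, b] f 2 := by
            intro t ht
            rcases Finset.mem_insert.mp ht with rfl | ht
            · exact h0mem
            · rw [Finset.mem_singleton] at ht
              subst ht
              exact h1mem
          have := Finset.card_le_card hsub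
          simpa using this
        have hstart := (hrows 2 (by omega)).2 hcard2
        have hf00 : f 0 0 = 2 := hstart 0 h0mem
        have hf10 : f 1 0 = 2 := hstart 1 h1mem
        have hX0z : X0 = 0 := by
          rw [hX0def, Finset.card_eq_zero, Finset.filter_eq_empty_iff]
          intro j hj
          rw [Finset.mem_range] at hj
          have := hmono 0 0 j (by simp) (Nat.zero_le j) (by simpa using hj)
          omega
        have hX1z : X1 = 0 := by
          rw [hX1def, Finset.card_eq_zero, Finset.filter_eq_empty_iff]
          intro j hj
          rw [Finset.mem_range] at hj
          have := hmono 1 0 j (by simp) (Nat.zero_le j) (by simpa using hj)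
          omega
        omega
    have hX1b : X1 = b := by omega
    have hX0c : X0 = a - (b + 1) := by omega
    -- row 0 structure via down-closedness
    have hdc : ∀ j ∈ (Finset.range a).filter (fun j => f 0 j = 1),
        ∀ k, k ≤ j → k ∈ (Finset.range a).filter (fun j => f 0 j = 1) := by
      intro j hj k hkj
      rw [Finset.mem_filter, Finset.mem_range] at hj ⊢
      have hka : k < a := by omega
      have hk1 := hpos 0 k (by simp) (by simpa using hka)
      have := hmono 0 k j (by simp) hkj (by simpa using hj.1)
      exact ⟨hka, by omega⟩
    have hrow0 : ∀ j, j < a → (f 0 j = 1 ↔ j < a - (b + 1)) := by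
      intro j hj
      have := downset_mem_iff _ hdc j
      rw [Finset.mem_filter, Finset.mem_range, ← hX0def, hX0c] at this
      constructor
      · intro h
        exact this.mp ⟨hj, h⟩
      · intro h
        exact (this.mpr h).2
    have hrow1 : ∀ j, j < b → f 1 j = 1 := by
      have heq : (Finset.range b).filter (fun j => f 1 j = 1) = Finset.range b :=
        Finset.eq_of_subset_of_card_le (Finset.filter_subset _ _)
          (by rw [← hX1def, hX1b]; simp)
      intro j hj
      have hm : j ∈ (Finset.range b).filter (fun j => f 1 j = 1) := by
        rw [heq]; exact Finset.mem_range.mpr hj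
      exact (Finset.mem_filter.mp hm).2
    funext i j
    show f i j = if i = 0 ∧ j < a then (if a - (b + 1) ≤ j then 2 else 1)
      else if i = 1 ∧ j < b then 1 else 0
    by_cases hij0 : i = 0 ∧ j < a
    · obtain ⟨rfl, hj⟩ := hij0
      rw [if_pos ⟨rfl, hj⟩]
      by_cases hjc : a - (b + 1) ≤ j
      · rw [if_pos hjc]
        rcases hval0 j hj with h | h
        · have := (hrow0 j hj).mp h
          omega
        · exact h
      · rw [if_neg hjc]
        exact (hrow0 j hj).mpr (by omega)
    · rw [if_neg hij0]
      by_cases hij1 : i = 1 ∧ j < b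
      · obtain ⟨rfl, hj⟩ := hij1
        rw [if_pos ⟨rfl, hj⟩]
        exact hrow1 j hj
      · rw [if_neg hij1]
        apply hcan
        rintro ⟨hi, hj⟩
        simp only [List.length_cons, List.length_nil] at hi
        interval_cases i
        · exact hij0 ⟨rfl, by simpa using hj⟩
        · exact hij1 ⟨rfl, by simpa using hj⟩
  · rintro rfl
    refine ⟨?_, ⟨?_, ?_, ?_, ?_, ?_⟩, cc1, cc2, cc3⟩
    · -- Canonical
      intro i j hnot
      have h1 : ¬(i = 0 ∧ j < a) := by
        rintro ⟨rfl, hj⟩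
        exact hnot ⟨by simp, by simpa using hj⟩
      have h2 : ¬(i = 1 ∧ j < b) := by
        rintro ⟨rfl, hj⟩
        exact hnot ⟨by simp, by simpa using hj⟩
      show G i j = 0
      simp [hGdef, h1, h2]
    · -- positivity
      intro i j hi hj
      simp only [List.length_cons, List.length_nil] at hi
      interval_cases i
      · show 1 ≤ G 0 j
        rw [hG0 j (by simpa using hj)]
        split <;> omega
      · show 1 ≤ G 1 j
        rw [hG1 j (by simpa using hj)]
    · -- weakly increasing
      intro i j j' hi hjj' hj'
      simp only [List.length_cons, List.length_nil] at hi
      interval_cases i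
      · show G 0 j ≤ G 0 j'
        have hj'a : j' < a := by simpa using hj'
        rw [hG0 j (by omega), hG0 j' hj'a]
        split_ifs <;> omega
      · show G 1 j ≤ G 1 j'
        have hj'b : j' < b := by simpa using hj'
        rw [hG1 j (by omega), hG1 j' hj'b]
    · -- odd counts
      intro v hv
      by_cases hv1 : v = 1
      · subst hv1
        right
        rw [cc1, Nat.odd_iff]
        omega
      · by_cases hv2 : v = 2
        · subst hv2
          right
          rw [cc2, Nat.odd_iff]
          omega
        · left
          exact cc3 v (by omega)
    · -- rowsOf
      intro v hv
      have hsub : rowsOf [a, b] G v ⊆ Finset.range 2 := by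
        intro t ht
        have := Finset.mem_filter.mp ht
        simpa using this.1
      constructor
      · have := Finset.card_le_card hsub
        simpa using this
      · intro hcard2 i hi
        have heq : rowsOf [a, b] G v = Finset.range 2 :=
          Finset.eq_of_subset_of_card_le hsub (by simp [hcard2])
        have h1mem : (1 : ℕ) ∈ rowsOf [a, b] G v := by rw [heq]; simp
        obtain ⟨-, j, hj, hjv⟩ := Finset.mem_filter.mp h1mem
        rw [Finset.mem_range] at hj
        have hjb : j < b := by simpa using hj
        have hv1 : v = 1 := by rw [← hjv, hG1 j hjb]
        subst hv1
        have hi2 : i < 2 := by simpa using (Finset.mem_filter.mp hi).1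
        interval_cases i
        · exact hG0a 0 (by omega)
        · exact hG1 0 hb
    · -- partial shapes distinct
      intro v i i' hv hii' hi' hne0 hne0'
      simp only [List.length_cons, List.length_nil] at hi'
      have hi0 : i = 0 := by omega
      have hi'1 : i' = 1 := by omega
      subst hi0; subst hi'1
      by_cases hv1 : v = 1
      · subst hv1
        have p0 : partialCount [a, b] G 1 0 = a - (b + 1) := by
          rw [partialCount_pair0]
          have : (Finset.range a).filter (fun j => G 0 j ≤ 1) =
              (Finset.range a).filter (fun j => G 0 j = 1) := by
            apply Finset.filter_congr
            intro j hj
            rw [Finset.mem_range] at hj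
            rw [hG0 j hj]
            split <;> omega
          rw [this, e1]
          simp
        have p1 : partialCount [a, b] G 1 1 = b := by
          rw [partialCount_pair1]
          have : (Finset.range b).filter (fun j => G 1 j ≤ 1) = Finset.range b :=
            Finset.filter_true_of_mem (fun j hj => by
              rw [hG1 j (Finset.mem_range.mp hj)])
          rw [this]
          simp
        rw [p0, p1]
        omega
      · have p0 : partialCount [a, b] G v 0 = a := by
          rw [partialCount_pair0]
          have : (Finset.range a).filter (fun j => G 0 j ≤ v) = Finset.range a :=
            Finset.filter_true_of_mem (fun j hj => by
              rw [hG0 j (Finset.mem_range.mp hj)]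
              split <;> omega)
          rw [this]
          simp
        have p1 : partialCount [a, b] G v 1 = b := by
          rw [partialCount_pair1]
          have : (Finset.range b).filter (fun j => G 1 j ≤ v) = Finset.range b :=
            Finset.filter_true_of_mem (fun j hj => by
              rw [hG1 j (Finset.mem_range.mp hj)]
              omega)
          rw [this]
          simp
        rw [p0, p1]
        omega
end
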